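/- arXiv:math/0308230 — 6 statements merged into one kernel-verified Lean document; each statement's English description precedes it below -/
import Mathlib

section
/- For every b' in the commutant B' there exists a unique bounded operator ρ'(b') ∈ B(H) satisfying ρ'(b')(x g) = x (b' g) for all x ∈ E and g ∈ G; moreover ‖ρ'(b')‖ ≤ ‖b'‖, and the resulting map b' ↦ ρ'(b') is a unital *-homomorphism from B' into B(H). -/
open ContinuousLinearMap

/-- A set of bounded operators is closed in the strong operator topology, i.e. the
topology of pointwise norm convergence: every bounded operator lying in the closure of
the set inside `G → H` (with the product topology of the norm topologies) belongs to it. -/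
def SOTClosed {G H : Type*} [NormedAddCommGroup G] [InnerProductSpace ℂ G]
    [NormedAddCommGroup H] [InnerProductSpace ℂ H] (E : Set (G →L[ℂ] H)) : Prop :=
  ∀ T : G →L[ℂ] H, ⇑T ∈ closure ((fun S : G →L[ℂ] H => ⇑S) '' E) → T ∈ E

/-!
Fix `b' ∈ B'` and finitely many `xᵢ ∈ E`, `gᵢ ∈ G`, and put `w a = ∑ xᵢ (a gᵢ)`. Since
`xⱼ* xᵢ ∈ B` commutes with `B'`, we get `⟪w d, w e⟫ = ⟪w 1, w (d* e)⟫` for `d ∈ B'`. The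
von Neumann algebra `B'` contains `c = √(‖b'‖² - b'* b')`, so
`‖b'‖² ‖w 1‖² - ‖w b'‖² = ‖w c‖² ≥ 0`. Hence `∑ xᵢ gᵢ ↦ ∑ xᵢ (b' gᵢ)` is well defined and
bounded by `‖b'‖` on the dense span of the vectors `x g`, and extends to `H`. Uniqueness is
density, and the *-homomorphism identities follow from uniqueness.
-/

open scoped InnerProductSpace

theorem eq_of_forall_inner_eq_of_dense_span {H : Type*} [NormedAddCommGroup H]
    [InnerProductSpace ℂ H] {s : Set H} (hs : Dense (Submodule.span ℂ s : Set H)) {u v : H}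
    (h : ∀ w ∈ s, ⟪u, w⟫_ℂ = ⟪v, w⟫_ℂ) : u = v :=
  ext_inner_right ℂ fun w =>
    DFunLike.congr_fun (ContinuousLinearMap.ext_on hs (f := innerSL ℂ u) (g := innerSL ℂ v) h) w

section

variable {G H : Type*}
    [NormedAddCommGroup G] [InnerProductSpace ℂ G] [CompleteSpace G]
    [NormedAddCommGroup H] [InnerProductSpace ℂ H] [CompleteSpace H]
    {B : VonNeumannAlgebra G} {E : Submodule ℂ (G →L[ℂ] H)}

theorem inner_apply_mem_commutant {x y : G →L[ℂ] H} (hyx : (adjoint y).comp x ∈ B)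
    {b' : G →L[ℂ] G} (hb' : b' ∈ B.commutant) (u v : G) :
    ⟪x (b' u), y v⟫_ℂ = ⟪x u, y (adjoint b' v)⟫_ℂ :=
  calc ⟪x (b' u), y v⟫_ℂ = ⟪((adjoint y).comp x) (b' u), v⟫_ℂ := by
        rw [comp_apply, adjoint_inner_left]
    _ = ⟪b' (((adjoint y).comp x) u), v⟫_ℂ :=
        congrArg (⟪·, v⟫_ℂ)
          (DFunLike.congr_fun (VonNeumannAlgebra.mem_commutant_iff.mp hb' _ hyx) u)
    _ = ⟪x u, y (adjoint b' v)⟫_ℂ := by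
        rw [← adjoint_inner_right b', comp_apply, adjoint_inner_left]

theorem inner_sum_apply_mem_commutant {ι : Type*} (s : Finset ι) {x : ι → G →L[ℂ] H}
    (hx : ∀ i j, (adjoint (x i)).comp (x j) ∈ B) (g : ι → G)
    {d : G →L[ℂ] G} (hd : d ∈ B.commutant) (e : G →L[ℂ] G) :
    ⟪∑ i ∈ s, x i (d (g i)), ∑ i ∈ s, x i (e (g i))⟫_ℂ =
      ⟪∑ i ∈ s, x i (g i), ∑ i ∈ s, x i ((star d * e) (g i))⟫_ℂ := by
  simp only [sum_inner, inner_sum, mul_apply_eq_comp, star_eq_adjoint]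
  exact Finset.sum_congr rfl fun i _ => Finset.sum_congr rfl fun j _ =>
    inner_apply_mem_commutant (hx _ _) hd _ _

theorem VonNeumannAlgebra.exists_star_mul_self_eq_norm_sq_sub (S : VonNeumannAlgebra G)
    {a : G →L[ℂ] G} (ha : a ∈ S) :
    ∃ c ∈ S, star c * c = algebraMap ℝ (G →L[ℂ] G) (‖a‖ ^ 2) - star a * a := by
  set p := algebraMap ℝ (G →L[ℂ] G) (‖a‖ ^ 2) - star a * a
  have hp : 0 ≤ p := sub_nonneg.2 CStarAlgebra.star_mul_le_algebraMap_norm_sq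
  refine ⟨CFC.sqrt p, ?_, ?_⟩
  · rw [← S.commutant_commutant, VonNeumannAlgebra.mem_commutant_iff]
    intro b hb
    have hab : Commute a b := VonNeumannAlgebra.mem_commutant_iff.mp hb a ha
    have hsab : Commute (star a) b :=
      VonNeumannAlgebra.mem_commutant_iff.mp hb _ (star_mem ha)
    have hpb : Commute p b :=
      (Algebra.commute_algebraMap_left _ b).sub_left (hsab.mul_left hab)
    exact (hpb.cfcₙ_nnreal NNReal.sqrt).symm.eq
  · rw [(CFC.sqrt_nonneg p).isSelfAdjoint.star_eq, CFC.sqrt_mul_sqrt_self p hp]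

theorem norm_sum_apply_mem_commutant_le {ι : Type*} (s : Finset ι) {x : ι → G →L[ℂ] H}
    (hx : ∀ i j, (adjoint (x i)).comp (x j) ∈ B) (g : ι → G)
    {b' : G →L[ℂ] G} (hb' : b' ∈ B.commutant) :
    ‖∑ i ∈ s, x i (b' (g i))‖ ≤ ‖b'‖ * ‖∑ i ∈ s, x i (g i)‖ := by
  set w : (G →L[ℂ] G) → H := fun a => ∑ i ∈ s, x i (a (g i))
  have hw1 : w 1 = ∑ i ∈ s, x i (g i) := by simp [w]
  have hnorm_sq : ∀ d ∈ B.commutant, ‖w d‖ ^ 2 = RCLike.re ⟪w 1, w (star d * d)⟫_ℂ := by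
    intro d hd
    rw [hw1, ← inner_sum_apply_mem_commutant s hx g hd d, inner_self_eq_norm_sq]
  obtain ⟨c, hc, hcc⟩ := B.commutant.exists_star_mul_self_eq_norm_sq_sub hb'
  have hwc : w (star c * c) = (‖b'‖ ^ 2 : ℝ) • w 1 - w (star b' * b') := by
    simp [w, hcc, Finset.sum_sub_distrib, Finset.smul_sum, ContinuousLinearMap.algebraMap_apply,
      pow_two, smul_smul]
  have hle : ‖w b'‖ ^ 2 ≤ (‖b'‖ * ‖w 1‖) ^ 2 := by
    have h := hnorm_sq c hc
    rw [hwc, inner_sub_right, inner_smul_right_eq_smul, map_sub, RCLike.smul_re,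
      inner_self_eq_norm_sq, ← hnorm_sq b' hb'] at h
    nlinarith [sq_nonneg ‖w c‖]
  exact (pow_le_pow_iff_left₀ (norm_nonneg _) (by positivity) two_ne_zero).mp hle

theorem exists_forall_apply_apply_eq_and_opNorm_le
    (hE1 : ∀ x ∈ E, ∀ y ∈ E, (adjoint x).comp y ∈ B)
    (hE4 : Dense (Submodule.span ℂ {h : H | ∃ x ∈ E, ∃ g : G, x g = h} : Set H))
    {b' : G →L[ℂ] G} (hb' : b' ∈ B.commutant) :
    ∃ T : H →L[ℂ] H, (∀ x ∈ E, ∀ g : G, T (x g) = x (b' g)) ∧ ‖T‖ ≤ ‖b'‖ := by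
  let Φ := Finsupp.linearCombination ℂ fun p : E × G => (p.1 : G →L[ℂ] H) p.2
  let Ψ := Finsupp.linearCombination ℂ fun p : E × G => (p.1 : G →L[ℂ] H) (b' p.2)
  have hdense : DenseRange Φ := by
    rw [DenseRange, ← LinearMap.coe_range, Finsupp.range_linearCombination]
    convert hE4 using 4
    ext h
    simp [eq_comm]
  have hbound : ∀ f, ‖Ψ f‖ ≤ ‖b'‖ * ‖Φ f‖ := fun f => by
    simpa [Φ, Ψ, Finsupp.linearCombination_apply, Finsupp.sum] using
      norm_sum_apply_mem_commutant_le f.support (x := fun p : E × G => (p.1 : G →L[ℂ] H))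
        (fun i j => hE1 _ i.1.2 _ j.1.2) (fun p => f p • p.2) hb'
  refine ⟨Ψ.extendOfNorm Φ, fun x hx g => ?_,
    LinearMap.opNorm_extendOfNorm_le hdense (norm_nonneg _) hbound⟩
  simpa [Φ, Ψ] using
    LinearMap.extendOfNorm_eq hdense ⟨_, hbound⟩ (Finsupp.single (⟨x, hx⟩, g) 1)

theorem adjoint_apply_apply_eq_apply_adjoint
    (hE1 : ∀ x ∈ E, ∀ y ∈ E, (adjoint x).comp y ∈ B)
    (hE4 : Dense (Submodule.span ℂ {h : H | ∃ x ∈ E, ∃ g : G, x g = h} : Set H))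
    {a : G →L[ℂ] G} (ha : a ∈ B.commutant) {T : H →L[ℂ] H}
    (hT : ∀ x ∈ E, ∀ g : G, T (x g) = x (a g)) {x : G →L[ℂ] H} (hx : x ∈ E) (g : G) :
    adjoint T (x g) = x (adjoint a g) := by
  refine eq_of_forall_inner_eq_of_dense_span hE4 ?_
  rintro _ ⟨y, hy, f, rfl⟩
  have ha' : adjoint a ∈ B.commutant := star_eq_adjoint a ▸ star_mem ha
  rw [adjoint_inner_left, hT y hy, inner_apply_mem_commutant (hE1 y hy x hx) ha', adjoint_adjoint]

end

theorem exists_unique_commutant_representation_general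
    {G H : Type*}
    [NormedAddCommGroup G] [InnerProductSpace ℂ G] [CompleteSpace G]
    [NormedAddCommGroup H] [InnerProductSpace ℂ H] [CompleteSpace H]
    (B : VonNeumannAlgebra G)
    (E : Submodule ℂ (G →L[ℂ] H))
    (hE1 : ∀ x ∈ E, ∀ y ∈ E, (adjoint x).comp y ∈ B)
    (hE4 : Dense (Submodule.span ℂ {h : H | ∃ x ∈ E, ∃ g : G, x g = h} : Set H))
    :
    ∃ ρ : (G →L[ℂ] G) → (H →L[ℂ] H),
      (∀ b' ∈ B.commutant, ∀ x ∈ E, ∀ g : G, ρ b' (x g) = x (b' g)) ∧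
      (∀ b' ∈ B.commutant, ∀ T : H →L[ℂ] H,
        (∀ x ∈ E, ∀ g : G, T (x g) = x (b' g)) → T = ρ b') ∧
      (∀ b' ∈ B.commutant, ‖ρ b'‖ ≤ ‖b'‖) ∧
      ρ 1 = 1 ∧
      (∀ a ∈ B.commutant, ∀ b ∈ B.commutant, ρ (a * b) = ρ a * ρ b) ∧
      (∀ a ∈ B.commutant, ∀ b ∈ B.commutant, ρ (a + b) = ρ a + ρ b) ∧
      (∀ (c : ℂ), ∀ a ∈ B.commutant, ρ (c • a) = c • ρ a) ∧
      (∀ a ∈ B.commutant, ρ (star a) = star (ρ a)) := by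
  choose! ρ hρ hρ_norm using fun b' (hb' : b' ∈ B.commutant) =>
    exists_forall_apply_apply_eq_and_opNorm_le hE1 hE4 hb'
  have huniq : ∀ b' ∈ B.commutant, ∀ T : H →L[ℂ] H,
      (∀ x ∈ E, ∀ g : G, T (x g) = x (b' g)) → T = ρ b' := fun b' hb' T hT =>
    ContinuousLinearMap.ext_on hE4 <| by
      rintro _ ⟨x, hx, g, rfl⟩
      exact (hT x hx g).trans (hρ b' hb' x hx g).symm
  refine ⟨ρ, hρ, huniq, hρ_norm, ?_, ?_, ?_, ?_, ?_⟩
  · exact (huniq 1 (one_mem _) 1 fun x _ g => rfl).symm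
  · exact fun a ha b hb =>
      (huniq _ (mul_mem ha hb) _ fun x hx g => by simp [hρ, ha, hb, hx]).symm
  · exact fun a ha b hb =>
      (huniq _ (add_mem ha hb) _ fun x hx g => by simp [hρ, ha, hb, hx]).symm
  · exact fun c a ha => (huniq _ (B.commutant.toStarSubalgebra.smul_mem ha c) _
      fun x hx g => by simp [hρ, ha, hx]).symm
  · exact fun a ha => (huniq _ (star_mem ha) _ fun x hx g => by
      simp only [star_eq_adjoint]
      exact adjoint_apply_apply_eq_apply_adjoint hE1 hE4 ha (hρ a ha) hx g).symm

/-- For every `b'` in the commutant `B'` there is a unique bounded operator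
`ρ'(b')` on `H` with `ρ'(b') (x g) = x (b' g)`; it satisfies `‖ρ'(b')‖ ≤ ‖b'‖` and
`b' ↦ ρ'(b')` is a unital *-homomorphism. -/
theorem exists_unique_commutant_representation
    {G H : Type*}
    [NormedAddCommGroup G] [InnerProductSpace ℂ G] [CompleteSpace G]
    [NormedAddCommGroup H] [InnerProductSpace ℂ H] [CompleteSpace H]
    (B : VonNeumannAlgebra G)
    (E : Submodule ℂ (G →L[ℂ] H))
    (hE1 : ∀ x ∈ E, ∀ y ∈ E, (adjoint x).comp y ∈ B)
    (hE2 : ∀ x ∈ E, ∀ b ∈ B, x.comp b ∈ E)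
    (hE3 : SOTClosed (E : Set (G →L[ℂ] H)))
    (hE4 : Dense (Submodule.span ℂ {h : H | ∃ x ∈ E, ∃ g : G, x g = h} : Set H))
    :
    ∃ ρ : (G →L[ℂ] G) → (H →L[ℂ] H),
      (∀ b' ∈ B.commutant, ∀ x ∈ E, ∀ g : G, ρ b' (x g) = x (b' g)) ∧
      (∀ b' ∈ B.commutant, ∀ T : H →L[ℂ] H,
        (∀ x ∈ E, ∀ g : G, T (x g) = x (b' g)) → T = ρ b') ∧
      (∀ b' ∈ B.commutant, ‖ρ b'‖ ≤ ‖b'‖) ∧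
      ρ 1 = 1 ∧
      (∀ a ∈ B.commutant, ∀ b ∈ B.commutant, ρ (a * b) = ρ a * ρ b) ∧
      (∀ a ∈ B.commutant, ∀ b ∈ B.commutant, ρ (a + b) = ρ a + ρ b) ∧
      (∀ (c : ℂ), ∀ a ∈ B.commutant, ρ (c • a) = c • ρ a) ∧
      (∀ a ∈ B.commutant, ρ (star a) = star (ρ a)) :=
  exists_unique_commutant_representation_general B E hE1 hE4
end

section
/- Let M ⊆ B(G ⊕ H) be the set of block operators (g, h) ↦ (b g + y* h, x g + a h) with b ∈ B, x ∈ E, y ∈ E, and a ∈ B^a(E). Then the commutant of M in B(G ⊕ H) equals the set of diagonal operators (g, h) ↦ (b' g, ρ'(b') h) with b' ∈ B'. -/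
open ContinuousLinearMap

/-- The block operator `(g, h) ↦ (b g + yS h, x g + a h)` on the Hilbert space direct
sum `G ⊕ H` (realized as `WithLp 2 (G × H)`). -/
noncomputable def blockOp {G H : Type*}
    [NormedAddCommGroup G] [InnerProductSpace ℂ G] [CompleteSpace G]
    [NormedAddCommGroup H] [InnerProductSpace ℂ H] [CompleteSpace H]
    (b : G →L[ℂ] G) (yS : H →L[ℂ] G) (x : G →L[ℂ] H) (a : H →L[ℂ] H) :
    WithLp 2 (G × H) →L[ℂ] WithLp 2 (G × H) :=
  (((WithLp.prodContinuousLinearEquiv 2 ℂ G H).symm :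
      (G × H) →L[ℂ] WithLp 2 (G × H)).comp
    ((b.coprod yS).prod (x.coprod a))).comp
    (WithLp.prodContinuousLinearEquiv 2 ℂ G H : WithLp 2 (G × H) →L[ℂ] G × H)

/-! Commuting with the corner projection `diag(1, 0) ∈ M` forces an operator of the commutant
to be diagonal, `diag(b', a')`. Commuting with `diag(b, 0)`, `b ∈ B`, puts `b'` in `B'`, and
commuting with the lower-left corners `x ∈ E` gives `a' x = x b' = ρ'(b') x`, whence
`a' = ρ'(b')` because the ranges of the `x ∈ E` span a dense subspace of `H`.
Conversely `ρ'(b')` intertwines every `x ∈ E` with `b'`, hence (as `ρ'` preserves adjoints) every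
`y*` with `b'` in the other direction, and it commutes with `a ∈ Bᵃ(E)` by the same density
argument applied to `a x ∈ E`. -/

theorem ContinuousLinearMap.eq_of_comp_eq_of_dense_span
    {R M₁ M₂ M₃ : Type*} [Semiring R]
    [TopologicalSpace M₁] [AddCommMonoid M₁] [Module R M₁]
    [TopologicalSpace M₂] [AddCommMonoid M₂] [Module R M₂]
    [TopologicalSpace M₃] [AddCommMonoid M₃] [Module R M₃] [T2Space M₃]
    {S : Set (M₁ →L[R] M₂)}
    (hS : Dense (Submodule.span R {h : M₂ | ∃ x ∈ S, ∃ g : M₁, x g = h} : Set M₂))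
    {a₁ a₂ : M₂ →L[R] M₃} (h : ∀ x ∈ S, a₁ ∘L x = a₂ ∘L x) : a₁ = a₂ :=
  ext_on hS <| by
    rintro _ ⟨x, hx, g, rfl⟩
    exact congrArg (· g) (h x hx)

section BlockOperators

variable {G H : Type*}
  [NormedAddCommGroup G] [InnerProductSpace ℂ G] [CompleteSpace G]
  [NormedAddCommGroup H] [InnerProductSpace ℂ H] [CompleteSpace H]

theorem blockOp_eq_conj (b : G →L[ℂ] G) (y : H →L[ℂ] G) (x : G →L[ℂ] H) (a : H →L[ℂ] H) :
    blockOp b y x a = (WithLp.prodContinuousLinearEquiv 2 ℂ G H).symm.conjContinuousAlgEquiv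
      ((b.coprod y).prod (x.coprod a)) :=
  rfl

theorem blockOp_inj {b b' : G →L[ℂ] G} {y y' : H →L[ℂ] G} {x x' : G →L[ℂ] H}
    {a a' : H →L[ℂ] H} :
    blockOp b y x a = blockOp b' y' x' a' ↔ b = b' ∧ y = y' ∧ x = x' ∧ a = a' := by
  rw [blockOp_eq_conj, blockOp_eq_conj, EquivLike.apply_eq_iff_eq]
  change prodEquiv (b.coprod y, x.coprod a) = prodEquiv (b'.coprod y', x'.coprod a') ↔ _
  rw [prodEquiv.injective.eq_iff, Prod.mk.injEq, prod_ext_iff, prod_ext_iff]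
  simp only [coprod_comp_inl, coprod_comp_inr, and_assoc]

theorem blockOp_mul (b₁ b₂ : G →L[ℂ] G) (y₁ y₂ : H →L[ℂ] G) (x₁ x₂ : G →L[ℂ] H)
    (a₁ a₂ : H →L[ℂ] H) :
    blockOp b₁ y₁ x₁ a₁ * blockOp b₂ y₂ x₂ a₂ =
      blockOp (b₁ ∘L b₂ + y₁ ∘L x₂) (b₁ ∘L y₂ + y₁ ∘L a₂)
        (x₁ ∘L b₂ + a₁ ∘L x₂) (x₁ ∘L y₂ + a₁ ∘L a₂) := by
  simp only [blockOp_eq_conj, ← map_mul]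
  congr 1
  ext <;> simp

theorem exists_blockOp_eq (T : WithLp 2 (G × H) →L[ℂ] WithLp 2 (G × H)) :
    ∃ b y x a, T = blockOp b y x a := by
  set T' := (WithLp.prodContinuousLinearEquiv 2 ℂ G H).symm.conjContinuousAlgEquiv.symm T
  refine ⟨(fst ℂ G H ∘L T') ∘L inl ℂ G H, (fst ℂ G H ∘L T') ∘L inr ℂ G H,
    (snd ℂ G H ∘L T') ∘L inl ℂ G H, (snd ℂ G H ∘L T') ∘L inr ℂ G H, ?_⟩
  rw [blockOp_eq_conj, coprod_comp_inl_inr, coprod_comp_inl_inr]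
  exact (AlgEquiv.apply_symm_apply _ T).symm

theorem blockOp_commute_diag_iff {b d : G →L[ℂ] G} {y : H →L[ℂ] G} {x : G →L[ℂ] H}
    {a c : H →L[ℂ] H} :
    blockOp b y x a * blockOp d 0 0 c = blockOp d 0 0 c * blockOp b y x a ↔
      b ∘L d = d ∘L b ∧ y ∘L c = d ∘L y ∧ x ∘L d = c ∘L x ∧ a ∘L c = c ∘L a := by
  simp only [blockOp_mul, blockOp_inj, comp_zero, zero_comp, add_zero, zero_add]

theorem blockOp_lower_commute_iff {b b' : G →L[ℂ] G} {y' : H →L[ℂ] G} {x x' : G →L[ℂ] H}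
    {a' : H →L[ℂ] H} :
    blockOp b 0 x 0 * blockOp b' y' x' a' = blockOp b' y' x' a' * blockOp b 0 x 0 ↔
      b ∘L b' = b' ∘L b + y' ∘L x ∧ b ∘L y' = 0 ∧ x ∘L b' = x' ∘L b + a' ∘L x ∧
        x ∘L y' = 0 := by
  simp only [blockOp_mul, blockOp_inj, comp_zero, zero_comp, add_zero]

theorem exists_diag_of_lower_commute (B : VonNeumannAlgebra G) (E : Submodule ℂ (G →L[ℂ] H))
    {T : WithLp 2 (G × H) →L[ℂ] WithLp 2 (G × H)}
    (hT : ∀ b ∈ B, ∀ x ∈ E, blockOp b 0 x 0 * T = T * blockOp b 0 x 0) :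
    ∃ b' ∈ B.commutant, ∃ c : H →L[ℂ] H, (∀ x ∈ E, c ∘L x = x ∘L b') ∧ T = blockOp b' 0 0 c := by
  obtain ⟨b', y', x', a', rfl⟩ := exists_blockOp_eq T
  have hcomm := fun b hb x hx => blockOp_lower_commute_iff.1 (hT b hb x hx)
  obtain ⟨-, hy', hx', -⟩ := hcomm 1 B.one_mem 0 E.zero_mem
  simp only [one_def, id_comp, comp_id, comp_zero, zero_comp, add_zero] at hy' hx'
  subst hy' hx'
  refine ⟨b', VonNeumannAlgebra.mem_commutant_iff.2 fun b hb => ?_, a', fun x hx => ?_, rfl⟩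
  · simpa [mul_def] using (hcomm b hb 0 E.zero_mem).1
  · simpa using ((hcomm 0 B.zero_mem x hx).2.2.1).symm

end BlockOperators

theorem commutant_of_matrix_algebra_general
    {G H : Type*}
    [NormedAddCommGroup G] [InnerProductSpace ℂ G] [CompleteSpace G]
    [NormedAddCommGroup H] [InnerProductSpace ℂ H] [CompleteSpace H]
    (B : VonNeumannAlgebra G)
    (E : Submodule ℂ (G →L[ℂ] H))
    (hE4 : Dense (Submodule.span ℂ {h : H | ∃ x ∈ E, ∃ g : G, x g = h} : Set H))
    (ρ' : (G →L[ℂ] G) → (H →L[ℂ] H))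
    (hρ_star : ∀ a ∈ B.commutant, ρ' (star a) = star (ρ' a))
    (hρ_int : ∀ b' ∈ B.commutant, ∀ x ∈ E, ∀ g : G, ρ' b' (x g) = x (b' g))
    :
    Set.centralizer
      {T : WithLp 2 (G × H) →L[ℂ] WithLp 2 (G × H) |
        ∃ b ∈ B, ∃ x ∈ E, ∃ y ∈ E, ∃ a : H →L[ℂ] H,
          ((∀ z ∈ E, a.comp z ∈ E) ∧ (∀ z ∈ E, (adjoint a).comp z ∈ E)) ∧
          T = blockOp b (adjoint y) x a}
    = {T : WithLp 2 (G × H) →L[ℂ] WithLp 2 (G × H) |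
        ∃ b' ∈ B.commutant, T = blockOp b' 0 0 (ρ' b')} := by
  have hint : ∀ b' ∈ B.commutant, ∀ x ∈ E, ρ' b' ∘L x = x ∘L b' := fun b' hb' x hx =>
    ext (hρ_int b' hb' x hx)
  ext T
  simp only [Set.mem_centralizer_iff, Set.mem_ofPred_eq]
  constructor
  · intro hT
    obtain ⟨b', hb', c, hc, rfl⟩ := exists_diag_of_lower_commute B E fun b hb x hx =>
      hT _ ⟨b, hb, x, hx, 0, E.zero_mem, 0, by simp [E.zero_mem], by simp⟩
    obtain rfl : c = ρ' b' :=
      eq_of_comp_eq_of_dense_span hE4 fun x hx => (hc x hx).trans (hint b' hb' x hx).symm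
    exact ⟨b', hb', rfl⟩
  · rintro ⟨b', hb', rfl⟩ _ ⟨b, hb, x, hx, y, hy, a, ⟨ha, -⟩, rfl⟩
    refine blockOp_commute_diag_iff.2 ⟨?_, ?_, (hint b' hb' x hx).symm, ?_⟩
    · exact VonNeumannAlgebra.mem_commutant_iff.1 hb' b hb
    · have hadj := congrArg adjoint (hint _ (star_mem hb') y hy)
      rw [adjoint_comp, adjoint_comp, hρ_star b' hb', star_eq_adjoint, star_eq_adjoint,
        adjoint_adjoint, adjoint_adjoint] at hadj
      exact hadj
    · refine eq_of_comp_eq_of_dense_span hE4 fun z hz => ?_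
      rw [comp_assoc, hint b' hb' z hz, ← comp_assoc, ← hint b' hb' _ (ha z hz), comp_assoc]

/-- The commutant of the matrix algebra `M = [[B, E*], [E, Bᵃ(E)]]` acting on `G ⊕ H`
consists exactly of the diagonal operators `diag(b', ρ'(b'))` with `b' ∈ B'`. -/
theorem commutant_of_matrix_algebra
    {G H : Type*}
    [NormedAddCommGroup G] [InnerProductSpace ℂ G] [CompleteSpace G]
    [NormedAddCommGroup H] [InnerProductSpace ℂ H] [CompleteSpace H]
    (B : VonNeumannAlgebra G)
    (E : Submodule ℂ (G →L[ℂ] H))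
    (hE1 : ∀ x ∈ E, ∀ y ∈ E, (adjoint x).comp y ∈ B)
    (hE2 : ∀ x ∈ E, ∀ b ∈ B, x.comp b ∈ E)
    (hE3 : SOTClosed (E : Set (G →L[ℂ] H)))
    (hE4 : Dense (Submodule.span ℂ {h : H | ∃ x ∈ E, ∃ g : G, x g = h} : Set H))
    (ρ' : (G →L[ℂ] G) → (H →L[ℂ] H))
    (hρ_one : ρ' 1 = 1)
    (hρ_mul : ∀ a ∈ B.commutant, ∀ b ∈ B.commutant, ρ' (a * b) = ρ' a * ρ' b)
    (hρ_add : ∀ a ∈ B.commutant, ∀ b ∈ B.commutant, ρ' (a + b) = ρ' a + ρ' b)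
    (hρ_smul : ∀ (c : ℂ), ∀ a ∈ B.commutant, ρ' (c • a) = c • ρ' a)
    (hρ_star : ∀ a ∈ B.commutant, ρ' (star a) = star (ρ' a))
    (hρ_int : ∀ b' ∈ B.commutant, ∀ x ∈ E, ∀ g : G, ρ' b' (x g) = x (b' g))
    :
    Set.centralizer
      {T : WithLp 2 (G × H) →L[ℂ] WithLp 2 (G × H) |
        ∃ b ∈ B, ∃ x ∈ E, ∃ y ∈ E, ∃ a : H →L[ℂ] H,
          ((∀ z ∈ E, a.comp z ∈ E) ∧ (∀ z ∈ E, (adjoint a).comp z ∈ E)) ∧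
          T = blockOp b (adjoint y) x a}
    = {T : WithLp 2 (G × H) →L[ℂ] WithLp 2 (G × H) |
        ∃ b' ∈ B.commutant, T = blockOp b' 0 0 (ρ' b')} :=
  commutant_of_matrix_algebra_general B E hE4 ρ' hρ_star hρ_int
end

section
/- B^a(E) is a von Neumann algebra acting on H: it is a unital *-subalgebra of B(H) that equals its own double commutant in B(H). -/
open ContinuousLinearMap

/-!
Let `a` commute with every operator commuting with `Bᵃ(E)`, and let `x ∈ E`. For finitely many
points `g₁, …, gₙ ∈ G`, the closure `K` of `{(z g₁, …, z gₙ) : z ∈ E}` in `Hⁿ` is invariant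
under the diagonal action of the *-closed set `Bᵃ(E)`. So the projection onto `K` commutes with
that action, its matrix entries lie in `Bᵃ(E)'`, and therefore the diagonal action of `a`
commutes with it too: `(a x g₁, …, a x gₙ) ∈ K`. Hence `a ∘ x` lies in the strong closure of
`E`, which is `E`; the same holds for `a*`, so `a ∈ Bᵃ(E)`.
-/

open Module.End (invtSubmodule)

theorem mem_closure_of_forall_finset_restrict {X : Type*} {Y : X → Type*}
    [∀ i, TopologicalSpace (Y i)] {S : Set (∀ i, Y i)} {f : ∀ i, Y i}
    (h : ∀ s : Finset X, s.restrict f ∈ closure (s.restrict '' S)) : f ∈ closure S := by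
  rw [mem_closure_iff_nhds]
  intro t ht
  rw [nhds_pi, Filter.mem_pi] at ht
  obtain ⟨I, hI, V, hV, hVt⟩ := ht
  obtain ⟨_, hyV, y, hyS, rfl⟩ := mem_closure_iff_nhds.1 (h hI.toFinset) (Set.univ.pi fun i => V i)
    (set_pi_mem_nhds Set.finite_univ fun i _ => hV i)
  exact ⟨y, hVt fun i hi => hyV ⟨i, hI.mem_toFinset.2 hi⟩ trivial, hyS⟩

section Projection

variable {𝕜 E : Type*} [RCLike 𝕜] [NormedAddCommGroup E] [InnerProductSpace 𝕜 E] [CompleteSpace E]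

theorem Submodule.commute_starProjection (K : Submodule 𝕜 E) [K.HasOrthogonalProjection]
    {T : E →L[𝕜] E} (hT : K ∈ invtSubmodule T) (hT' : K ∈ invtSubmodule (adjoint T)) :
    Commute K.starProjection T := by
  rw [K.isIdempotentElem_starProjection.commute_iff, K.range_starProjection, K.ker_starProjection]
  exact ⟨hT, orthogonal_mem_invtSubmodule hT'⟩

theorem Submodule.mem_invtSubmodule_of_mem_centralizer_centralizer (K : Submodule 𝕜 E)
    [K.HasOrthogonalProjection] {S : Set (E →L[𝕜] E)} (hS : ∀ c ∈ S, star c ∈ S)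
    (hK : ∀ c ∈ S, K ∈ invtSubmodule c) {a : E →L[𝕜] E} (ha : a ∈ S.centralizer.centralizer) :
    K ∈ invtSubmodule a := by
  have hP : K.starProjection ∈ S.centralizer := fun c hc =>
    (K.commute_starProjection (hK c hc) (hK _ (hS c hc))).eq.symm
  have := (K.isIdempotentElem_starProjection.commute_iff (T := a)).1 (ha _ hP)
  exact K.range_starProjection ▸ this.1

end Projection

namespace ContinuousLinearMap

variable {𝕜 H : Type*} [RCLike 𝕜] [NormedAddCommGroup H] [InnerProductSpace 𝕜 H]
  {ι : Type*}

variable (ι) in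
def amplify (c : H →L[𝕜] H) : PiLp 2 (fun _ : ι => H) →L[𝕜] PiLp 2 (fun _ : ι => H) :=
  (PiLp.continuousLinearEquiv 2 𝕜 _).symm.toContinuousLinearMap ∘L
    ContinuousLinearMap.pi fun i => c ∘L PiLp.proj 2 _ i

@[simp]
theorem amplify_apply (c : H →L[𝕜] H) (v : PiLp 2 (fun _ : ι => H)) (i : ι) :
    amplify ι c v i = c (v i) := rfl

theorem adjoint_amplify [Fintype ι] [CompleteSpace H] (c : H →L[𝕜] H) :
    adjoint (amplify ι c) = amplify ι (adjoint c) := by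
  refine ((eq_adjoint_iff _ _).2 fun u v => ?_).symm
  simp only [PiLp.inner_apply, amplify_apply, adjoint_inner_left]

variable [DecidableEq ι]

theorem amplify_single (c : H →L[𝕜] H) (j : ι) (h : H) :
    amplify ι c (PiLp.single 2 j h) = PiLp.single 2 j (c h) := by
  ext i
  by_cases hij : i = j <;> simp [hij]

def entry (T : PiLp 2 (fun _ : ι => H) →L[𝕜] PiLp 2 (fun _ : ι => H)) (i j : ι) : H →L[𝕜] H :=
  PiLp.proj 2 _ i ∘L T ∘L
    ((PiLp.continuousLinearEquiv 2 𝕜 _).symm.toContinuousLinearMap ∘L single 𝕜 (fun _ : ι => H) j)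

theorem entry_apply (T : PiLp 2 (fun _ : ι => H) →L[𝕜] PiLp 2 (fun _ : ι => H)) (i j : ι) (h : H) :
    entry T i j h = T (PiLp.single 2 j h) i := rfl

theorem apply_eq_sum_entry [Fintype ι] (T : PiLp 2 (fun _ : ι => H) →L[𝕜] PiLp 2 (fun _ : ι => H))
    (v : PiLp 2 (fun _ : ι => H)) (i : ι) : T v i = ∑ j, entry T i j (v j) := by
  have hv : v = ∑ j, PiLp.single 2 j (v j) := by
    ext k
    simp
  conv_lhs => rw [hv]
  simp [entry_apply]

theorem entry_comp_amplify (T : PiLp 2 (fun _ : ι => H) →L[𝕜] PiLp 2 (fun _ : ι => H))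
    (c : H →L[𝕜] H) (i j : ι) : entry (T ∘L amplify ι c) i j = entry T i j ∘L c := by
  ext h
  simp [entry_apply, amplify_single]

theorem entry_amplify_comp (T : PiLp 2 (fun _ : ι => H) →L[𝕜] PiLp 2 (fun _ : ι => H))
    (c : H →L[𝕜] H) (i j : ι) : entry (amplify ι c ∘L T) i j = c ∘L entry T i j := rfl

theorem entry_mem_centralizer {S : Set (H →L[𝕜] H)}
    {T : PiLp 2 (fun _ : ι => H) →L[𝕜] PiLp 2 (fun _ : ι => H)}
    (hT : T ∈ (amplify ι '' S).centralizer) (i j : ι) : entry T i j ∈ S.centralizer := by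
  intro c hc
  have := congrArg (fun T => entry T i j) (hT _ ⟨c, hc, rfl⟩)
  simpa only [mul_def, entry_amplify_comp, entry_comp_amplify] using this

theorem commute_amplify_of_forall_commute_entry [Fintype ι]
    {T : PiLp 2 (fun _ : ι => H) →L[𝕜] PiLp 2 (fun _ : ι => H)} {a : H →L[𝕜] H}
    (h : ∀ i j, Commute (entry T i j) a) : Commute T (amplify ι a) := by
  ext v i
  calc T (amplify ι a v) i = ∑ j, entry T i j (a (v j)) := by simp [apply_eq_sum_entry T]
    _ = ∑ j, a (entry T i j (v j)) :=
      Finset.sum_congr rfl fun j _ => DFunLike.congr_fun (h i j).eq (v j)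
    _ = amplify ι a (T v) i := by simp [apply_eq_sum_entry T]

theorem amplify_mem_centralizer_centralizer [Fintype ι] {S : Set (H →L[𝕜] H)} {a : H →L[𝕜] H}
    (ha : a ∈ S.centralizer.centralizer) :
    amplify ι a ∈ (amplify ι '' S).centralizer.centralizer := fun _ hT =>
  (commute_amplify_of_forall_commute_entry fun i j => ha _ (entry_mem_centralizer hT i j)).eq

end ContinuousLinearMap

namespace Submodule

section

variable {𝕜 G H : Type*} [RCLike 𝕜] [NormedAddCommGroup G] [InnerProductSpace 𝕜 G]
  [NormedAddCommGroup H] [InnerProductSpace 𝕜 H] [CompleteSpace H]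

def adjointableOperators (E : Submodule 𝕜 (G →L[𝕜] H)) :
    StarSubalgebra 𝕜 (H →L[𝕜] H) where
  carrier := {a | (∀ x ∈ E, a.comp x ∈ E) ∧ (∀ x ∈ E, (adjoint a).comp x ∈ E)}
  mul_mem' {a b} ha hb :=
    ⟨fun x hx => ha.1 _ (hb.1 x hx), fun x hx => by
      rw [← star_eq_adjoint, star_mul, ContinuousLinearMap.mul_def, comp_assoc]
      exact hb.2 _ (ha.2 x hx)⟩
  add_mem' ha hb :=
    ⟨fun x hx => by simpa only [add_comp] using E.add_mem (ha.1 x hx) (hb.1 x hx),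
     fun x hx => by simpa only [map_add, add_comp] using E.add_mem (ha.2 x hx) (hb.2 x hx)⟩
  algebraMap_mem' c :=
    ⟨fun x hx => by
      rw [Algebra.algebraMap_eq_smul_one, smul_comp]
      exact E.smul_mem c hx,
     fun x hx => by
      rw [← star_eq_adjoint, Algebra.algebraMap_eq_smul_one, star_smul, star_one, smul_comp]
      exact E.smul_mem (star c) hx⟩
  star_mem' ha := ⟨ha.2, by simpa only [star_eq_adjoint, adjoint_adjoint] using ha.1⟩

theorem eval_comp_mem_closure_of_mem_centralizer_centralizer (E : Submodule 𝕜 (G →L[𝕜] H))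
    {a : H →L[𝕜] H}
    (ha : a ∈ (E.adjointableOperators : Set (H →L[𝕜] H)).centralizer.centralizer)
    {x : G →L[𝕜] H} (hx : x ∈ E) {ι : Type*} [Fintype ι] (g : ι → G) :
    (fun i => a (x (g i))) ∈ closure ((fun z : G →L[𝕜] H => fun i => z (g i)) '' E) := by
  classical
  let Φ : (G →L[𝕜] H) →ₗ[𝕜] PiLp 2 (fun _ : ι => H) :=
    (WithLp.linearEquiv 2 𝕜 _).symm.toLinearMap ∘ₗ
      LinearMap.pi fun i => (ContinuousLinearMap.apply 𝕜 H (g i)).toLinearMap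
  let K := (E.map Φ).topologicalClosure
  have hK : ∀ c ∈ E.adjointableOperators, K ∈ invtSubmodule (amplify ι c) := by
    intro c hc
    refine topologicalClosure_mem_invtSubmodule ?_
    rintro _ ⟨z, hz, rfl⟩
    exact ⟨c ∘L z, hc.1 z hz, rfl⟩
  have hstar : ∀ c ∈ amplify ι '' (E.adjointableOperators : Set (H →L[𝕜] H)),
      star c ∈ amplify ι '' (E.adjointableOperators : Set (H →L[𝕜] H)) := by
    rintro _ ⟨c, hc, rfl⟩
    exact ⟨star c, star_mem hc, (adjoint_amplify c).symm⟩
  have haK := K.mem_invtSubmodule_of_mem_centralizer_centralizer hstar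
    (Set.forall_mem_image.2 hK) (amplify_mem_centralizer_centralizer ha)
  have hax : amplify ι a (Φ x) ∈ closure (E.map Φ : Set (PiLp 2 (fun _ : ι => H))) :=
    haK (le_topologicalClosure _ ⟨x, hx, rfl⟩)
  exact map_mem_closure (PiLp.continuous_ofLp 2 _) hax fun _ ⟨z, hz, hzΦ⟩ => ⟨z, hz, hzΦ ▸ rfl⟩

end

section

variable {G H : Type*} [NormedAddCommGroup G] [InnerProductSpace ℂ G]
  [NormedAddCommGroup H] [InnerProductSpace ℂ H] [CompleteSpace H]
  {E : Submodule ℂ (G →L[ℂ] H)}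

theorem comp_mem_of_mem_centralizer_centralizer (hE : SOTClosed (E : Set (G →L[ℂ] H)))
    {a : H →L[ℂ] H} (ha : a ∈ (E.adjointableOperators : Set (H →L[ℂ] H)).centralizer.centralizer)
    {x : G →L[ℂ] H} (hx : x ∈ E) : a ∘L x ∈ E :=
  hE _ <| mem_closure_of_forall_finset_restrict fun s => by
    rw [Set.image_image]
    exact E.eval_comp_mem_closure_of_mem_centralizer_centralizer ha hx ((↑) : s → G)

theorem centralizer_centralizer_adjointableOperators (hE : SOTClosed (E : Set (G →L[ℂ] H))) :
    (E.adjointableOperators : Set (H →L[ℂ] H)).centralizer.centralizer =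
      E.adjointableOperators := by
  refine Set.Subset.antisymm (fun a ha => ?_) Set.subset_centralizer_centralizer
  have ha' := Set.star_mem_centralizer' (fun _ => Set.star_mem_centralizer' fun _ => star_mem) ha
  exact ⟨fun x hx => comp_mem_of_mem_centralizer_centralizer hE ha hx,
    fun x hx => comp_mem_of_mem_centralizer_centralizer hE ha' hx⟩

end

end Submodule

theorem adjointable_operators_vonNeumann_general
    {G H : Type*}
    [NormedAddCommGroup G] [InnerProductSpace ℂ G]
    [NormedAddCommGroup H] [InnerProductSpace ℂ H] [CompleteSpace H]
    (E : Submodule ℂ (G →L[ℂ] H))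
    (hE3 : SOTClosed (E : Set (G →L[ℂ] H)))
    (Ba : Set (H →L[ℂ] H))
    (hBa : Ba = {a : H →L[ℂ] H |
      (∀ x ∈ E, a.comp x ∈ E) ∧ (∀ x ∈ E, (adjoint a).comp x ∈ E)}) :
    (1 ∈ Ba) ∧
    (∀ a ∈ Ba, ∀ b ∈ Ba, a + b ∈ Ba) ∧
    (∀ (c : ℂ), ∀ a ∈ Ba, c • a ∈ Ba) ∧
    (∀ a ∈ Ba, ∀ b ∈ Ba, a * b ∈ Ba) ∧
    (∀ a ∈ Ba, star a ∈ Ba) ∧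
    Set.centralizer (Set.centralizer Ba) = Ba := by
  obtain rfl : Ba = E.adjointableOperators := hBa
  exact ⟨one_mem _, fun _ ha _ hb => add_mem ha hb, fun c _ ha => SMulMemClass.smul_mem c ha,
    fun _ ha _ hb => mul_mem ha hb, fun _ ha => star_mem ha,
    E.centralizer_centralizer_adjointableOperators hE3⟩

/-- `Bᵃ(E)`, the set of adjointable operators on `E` realized in `B(H)`, is a von
Neumann algebra on `H`: a unital *-subalgebra of `B(H)` equal to its double commutant. -/
theorem adjointable_operators_vonNeumann
    {G H : Type*}
    [NormedAddCommGroup G] [InnerProductSpace ℂ G] [CompleteSpace G]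
    [NormedAddCommGroup H] [InnerProductSpace ℂ H] [CompleteSpace H]
    (B : VonNeumannAlgebra G)
    (E : Submodule ℂ (G →L[ℂ] H))
    (hE1 : ∀ x ∈ E, ∀ y ∈ E, (adjoint x).comp y ∈ B)
    (hE2 : ∀ x ∈ E, ∀ b ∈ B, x.comp b ∈ E)
    (hE3 : SOTClosed (E : Set (G →L[ℂ] H)))
    (hE4 : Dense (Submodule.span ℂ {h : H | ∃ x ∈ E, ∃ g : G, x g = h} : Set H))
    (Ba : Set (H →L[ℂ] H))
    (hBa : Ba = {a : H →L[ℂ] H |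
      (∀ x ∈ E, a.comp x ∈ E) ∧ (∀ x ∈ E, (adjoint a).comp x ∈ E)}) :
    (1 ∈ Ba) ∧
    (∀ a ∈ Ba, ∀ b ∈ Ba, a + b ∈ Ba) ∧
    (∀ (c : ℂ), ∀ a ∈ Ba, c • a ∈ Ba) ∧
    (∀ a ∈ Ba, ∀ b ∈ Ba, a * b ∈ Ba) ∧
    (∀ a ∈ Ba, star a ∈ Ba) ∧
    Set.centralizer (Set.centralizer Ba) = Ba :=
  adjointable_operators_vonNeumann_general E hE3 Ba hBa
end

section
/- E = C_{B'}(B(G,H)), i.e. the concrete von Neumann B-module E equals the full intertwiner space {x ∈ B(G,H) : ρ'(b') ∘ x = x ∘ b' for all b' ∈ B'}. -/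
open ContinuousLinearMap

/-!
Let `x` intertwine `ρ'` on `B'`. For a finite family `Yᵢ` in `E` and `δ > 0` put
`c = ∑ Yᵢ Yᵢ*` and `r = (δ + c)⁻¹`. Every `ρ'(w)`, `w ∈ B'`, commutes with `c` and hence with
`r`, so `Yᵢ* r x` commutes with `B'`, i.e. lies in `B'' = B`, and `c r x = ∑ Yᵢ (Yᵢ* r x) ∈ E`.
On the other hand `c r x = x - δ r x`. Expanding `‖(δ + c) u‖²` shows that `δ r` is a contraction
and that `‖δ r Yᵢ‖ ≤ √δ / 2`, so `δ r → 0` strongly on the dense span of the ranges of the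
operators in `E`, as the family grows and `δ → 0`. Hence `x` is a strong limit of `c r x ∈ E`.
-/

open Filter Topology

theorem Commute.ringInverse_right {M₀ : Type*} [MonoidWithZero M₀] {a b : M₀}
    (h : Commute a b) : Commute a (Ring.inverse b) := by
  by_cases hb : IsUnit b
  · lift b to M₀ˣ using hb
    rw [Ring.inverse_unit]
    exact h.units_inv_right
  · rw [Ring.inverse_non_unit b hb]
    exact Commute.zero_right a

theorem ContinuousLinearMap.tendsto_apply_zero_of_dense_span {α 𝕜 E F : Type*}
    [NontriviallyNormedField 𝕜] [NormedAddCommGroup E] [NormedSpace 𝕜 E]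
    [NormedAddCommGroup F] [NormedSpace 𝕜 F] {l : Filter α} {A : α → E →L[𝕜] F} {C : ℝ}
    (hA : ∀ᶠ a in l, ‖A a‖ ≤ C) {D : Set E} (hD : Dense (Submodule.span 𝕜 D : Set E))
    (hDA : ∀ v ∈ D, Tendsto (fun a => A a v) l (𝓝 0)) (h : E) :
    Tendsto (fun a => A a h) l (𝓝 0) := by
  have hspan : ∀ v ∈ Submodule.span 𝕜 D, Tendsto (fun a => A a v) l (𝓝 0) := by
    intro v hv
    induction hv using Submodule.span_induction with
    | mem v hv => exact hDA v hv
    | zero => simpa using tendsto_const_nhds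
    | add v w _ _ hv hw => simpa using hv.add hw
    | smul c v _ hv => simpa using hv.const_smul c
  rw [Metric.tendsto_nhds]
  intro ε hε
  obtain ⟨v, hv, hhv⟩ := hD.exists_dist_lt h (show 0 < ε / (2 * (|C| + 1)) by positivity)
  filter_upwards [hA, Metric.tendsto_nhds.1 (hspan v hv) (ε / 2) (half_pos hε)] with a ha hav
  rw [dist_zero_right] at hav ⊢
  rw [dist_eq_norm, lt_div_iff₀ (by positivity)] at hhv
  calc ‖A a h‖ ≤ ‖A a (h - v)‖ + ‖A a v‖ := by
        simpa [map_sub] using norm_le_norm_sub_add (A a h) (A a v)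
    _ ≤ (|C| + 1) * ‖h - v‖ + ‖A a v‖ := by
        gcongr
        exact (A a).le_of_opNorm_le (ha.trans ((le_abs_self C).trans (by linarith))) _
    _ < ε := by linarith

section Frame

variable {G H ι : Type*} [NormedAddCommGroup G] [InnerProductSpace ℂ G] [CompleteSpace G]
  [NormedAddCommGroup H] [InnerProductSpace ℂ H] [CompleteSpace H]

noncomputable def frameOperator (Y : ι → G →L[ℂ] H) (s : Finset ι) : H →L[ℂ] H :=
  ∑ i ∈ s, Y i ∘L adjoint (Y i)

noncomputable def frameRegInv (Y : ι → G →L[ℂ] H) (s : Finset ι) (δ : ℝ) : H →L[ℂ] H :=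
  Ring.inverse (algebraMap ℝ (H →L[ℂ] H) δ + frameOperator Y s)

variable (Y : ι → G →L[ℂ] H) (s : Finset ι) {δ : ℝ}

theorem frameOperator_nonneg : 0 ≤ frameOperator Y s :=
  Finset.sum_nonneg fun i _ => (nonneg_iff_isPositive _).2 (isPositive_self_comp_adjoint (Y i))

theorem re_inner_frameOperator_apply_self (u : H) :
    RCLike.re (inner ℂ (frameOperator Y s u) u) = ∑ i ∈ s, ‖adjoint (Y i) u‖ ^ 2 := by
  simp [frameOperator, sum_apply, ← adjoint_inner_right, ← Complex.ofReal_pow]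

theorem isStrictlyPositive_algebraMap_add_frameOperator (hδ : 0 < δ) :
    IsStrictlyPositive (algebraMap ℝ (H →L[ℂ] H) δ + frameOperator Y s) :=
  (isStrictlyPositive_algebraMap hδ).add_nonneg (frameOperator_nonneg Y s)

theorem isSelfAdjoint_frameRegInv (hδ : 0 < δ) : IsSelfAdjoint (frameRegInv Y s δ) :=
  (isStrictlyPositive_algebraMap_add_frameOperator Y s hδ).ringInverse.isSelfAdjoint

theorem smul_frameRegInv_add_frameOperator_frameRegInv (hδ : 0 < δ) (h : H) :
    δ • frameRegInv Y s δ h + frameOperator Y s (frameRegInv Y s δ h) = h := by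
  have := congr($(Ring.mul_inverse_cancel _
    (isStrictlyPositive_algebraMap_add_frameOperator Y s hδ).isUnit) h)
  simpa [frameRegInv] using this

theorem norm_smul_frameRegInv_apply_le (hδ : 0 < δ) (h : H) :
    ‖δ • frameRegInv Y s δ h‖ ≤ ‖h‖ := by
  set u := frameRegInv Y s δ h
  have hq : 0 ≤ RCLike.re (inner ℂ (frameOperator Y s u) u) := by
    rw [re_inner_frameOperator_apply_self]; positivity
  have hexp := norm_add_sq (𝕜 := ℂ) (δ • u) (frameOperator Y s u)
  rw [smul_frameRegInv_add_frameOperator_frameRegInv Y s hδ, ← Complex.coe_smul,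
    inner_smul_left, Complex.conj_ofReal, RCLike.re_to_complex, Complex.re_ofReal_mul,
    ← RCLike.re_to_complex, inner_re_symm, norm_smul, Complex.norm_of_nonneg hδ.le] at hexp
  rw [norm_smul, Real.norm_of_nonneg hδ.le,
    ← pow_le_pow_iff_left₀ (by positivity) (norm_nonneg h) two_ne_zero]
  nlinarith [sq_nonneg ‖frameOperator Y s u‖]

theorem two_mul_sqrt_mul_norm_adjoint_frameRegInv_apply_le (hδ : 0 < δ) {i : ι} (hi : i ∈ s)
    (h : H) : 2 * √δ * ‖adjoint (Y i) (frameRegInv Y s δ h)‖ ≤ ‖h‖ := by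
  set u := frameRegInv Y s δ h
  have hq : ‖adjoint (Y i) u‖ ^ 2 ≤ RCLike.re (inner ℂ (frameOperator Y s u) u) := by
    rw [re_inner_frameOperator_apply_self]
    exact Finset.single_le_sum (f := fun j => ‖adjoint (Y j) u‖ ^ 2)
      (fun _ _ => by positivity) hi
  -- `‖δu + cu‖² = ‖δu - cu‖² + 4δ re⟪cu, u⟫`
  have hadd := norm_add_sq (𝕜 := ℂ) (δ • u) (frameOperator Y s u)
  have hsub := norm_sub_sq (𝕜 := ℂ) (δ • u) (frameOperator Y s u)
  rw [smul_frameRegInv_add_frameOperator_frameRegInv Y s hδ] at hadd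
  rw [← Complex.coe_smul, inner_smul_left, Complex.conj_ofReal, RCLike.re_to_complex,
    Complex.re_ofReal_mul, ← RCLike.re_to_complex, inner_re_symm] at hadd hsub
  rw [← pow_le_pow_iff_left₀ (by positivity) (norm_nonneg h) two_ne_zero, mul_pow, mul_pow,
    Real.sq_sqrt hδ.le]
  nlinarith [sq_nonneg ‖(δ : ℂ) • u - frameOperator Y s u‖]

theorem two_mul_sqrt_mul_norm_frameRegInv_comp_le (hδ : 0 < δ) {i : ι} (hi : i ∈ s) :
    2 * √δ * ‖frameRegInv Y s δ ∘L Y i‖ ≤ 1 := by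
  have hnorm : ‖frameRegInv Y s δ ∘L Y i‖ = ‖adjoint (Y i) ∘L frameRegInv Y s δ‖ := by
    rw [← LinearIsometryEquiv.norm_map adjoint, adjoint_comp,
      (isSelfAdjoint_frameRegInv Y s hδ).adjoint_eq]
  have hsqrt : 0 < 2 * √δ := by positivity
  rw [hnorm, ← le_div_iff₀' hsqrt]
  refine opNorm_le_bound _ (by positivity) fun h => ?_
  rw [div_mul_eq_mul_div, one_mul, le_div_iff₀' hsqrt]
  exact two_mul_sqrt_mul_norm_adjoint_frameRegInv_apply_le Y s hδ hi h

theorem norm_smul_frameRegInv_apply_le_sqrt (hδ : 0 < δ) {i : ι} (hi : i ∈ s) (g : G) :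
    ‖δ • frameRegInv Y s δ (Y i g)‖ ≤ √δ / 2 * ‖g‖ := by
  set N := ‖frameRegInv Y s δ ∘L Y i‖
  have hN : 2 * √δ * N ≤ 1 := two_mul_sqrt_mul_norm_frameRegInv_comp_le Y s hδ hi
  calc ‖δ • frameRegInv Y s δ (Y i g)‖ ≤ δ * (N * ‖g‖) := by
        rw [norm_smul, Real.norm_of_nonneg hδ.le]
        exact mul_le_mul_of_nonneg_left ((frameRegInv Y s δ ∘L Y i).le_opNorm g) hδ.le
    _ = √δ * (√δ * N) * ‖g‖ := by
        linear_combination -(N * ‖g‖) * Real.mul_self_sqrt hδ.le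
    _ ≤ √δ * (1 / 2) * ‖g‖ := by gcongr; linarith
    _ = √δ / 2 * ‖g‖ := by ring

theorem tendsto_smul_frameRegInv_apply
    (hdense : Dense (Submodule.span ℂ (⋃ i, Set.range (Y i)) : Set H)) (h : H) :
    Tendsto (fun p : Finset ι × ℝ => p.2 • frameRegInv Y p.1 p.2 h)
      (atTop ×ˢ 𝓝[>] 0) (𝓝 0) := by
  have hpos : ∀ᶠ p : Finset ι × ℝ in atTop ×ˢ 𝓝[>] 0, 0 < p.2 :=
    tendsto_snd.eventually self_mem_nhdsWithin
  refine tendsto_apply_zero_of_dense_span (C := 1)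
    (A := fun p : Finset ι × ℝ => p.2 • frameRegInv Y p.1 p.2) ?_ hdense ?_ h
  · filter_upwards [hpos] with p hp
    exact opNorm_le_bound _ zero_le_one fun h => by
      simpa using norm_smul_frameRegInv_apply_le Y p.1 hp h
  · rintro _ ⟨_, ⟨i, rfl⟩, g, rfl⟩
    have hsnd : Tendsto (fun p : Finset ι × ℝ => p.2) (atTop ×ˢ 𝓝[>] 0) (𝓝 0) :=
      tendsto_snd.mono_right nhdsWithin_le_nhds
    refine squeeze_zero_norm' ?_ (by simpa using (hsnd.sqrt.div_const 2).mul_const ‖g‖)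
    filter_upwards [hpos, tendsto_fst.eventually (eventually_ge_atTop {i})] with p hp hi
    exact norm_smul_frameRegInv_apply_le_sqrt Y p.1 hp (Finset.singleton_subset_iff.1 hi) g

theorem tendsto_frameOperator_frameRegInv_apply
    (hdense : Dense (Submodule.span ℂ (⋃ i, Set.range (Y i)) : Set H)) (h : H) :
    Tendsto (fun p : Finset ι × ℝ => frameOperator Y p.1 (frameRegInv Y p.1 p.2 h))
      (atTop ×ˢ 𝓝[>] 0) (𝓝 h) := by
  have hlim := (tendsto_smul_frameRegInv_apply Y hdense h).const_sub h
  rw [sub_zero] at hlim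
  refine hlim.congr' ?_
  filter_upwards [tendsto_snd.eventually self_mem_nhdsWithin] with p hp
  exact sub_eq_of_eq_add' (smul_frameRegInv_add_frameOperator_frameRegInv Y p.1 hp h).symm

end Frame

section Intertwiner

variable {G H : Type*} [NormedAddCommGroup G] [InnerProductSpace ℂ G] [CompleteSpace G]
  [NormedAddCommGroup H] [InnerProductSpace ℂ H] [CompleteSpace H]
  {ρ' : (G →L[ℂ] G) → (H →L[ℂ] H)}

def intertwiners (ρ' : (G →L[ℂ] G) → (H →L[ℂ] H)) (S : Set (G →L[ℂ] G)) :
    Set (G →L[ℂ] H) :=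
  {x | ∀ b' ∈ S, (ρ' b').comp x = x.comp b'}

theorem adjoint_comp_eq_of_mem_intertwiners {A : VonNeumannAlgebra G}
    (hρ_star : ∀ a ∈ A, ρ' (star a) = star (ρ' a)) {y : G →L[ℂ] H}
    (hy : y ∈ intertwiners ρ' A) {w : G →L[ℂ] G} (hw : w ∈ A) :
    adjoint y ∘L ρ' w = w ∘L adjoint y := by
  have := congr(adjoint $(hy (star w) (star_mem hw)))
  rwa [adjoint_comp, adjoint_comp, hρ_star w hw, ← star_eq_adjoint (star _),
    ← star_eq_adjoint (star _), star_star, star_star] at this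

theorem commute_frameOperator {ι : Type*} {A : VonNeumannAlgebra G}
    (hρ_star : ∀ a ∈ A, ρ' (star a) = star (ρ' a)) {Y : ι → G →L[ℂ] H} {s : Finset ι}
    (hY : ∀ i ∈ s, Y i ∈ intertwiners ρ' A) {w : G →L[ℂ] G} (hw : w ∈ A) :
    Commute (ρ' w) (frameOperator Y s) := by
  refine Commute.sum_right _ _ _ fun i hi => ?_
  change ρ' w ∘L (Y i ∘L adjoint (Y i)) = (Y i ∘L adjoint (Y i)) ∘L ρ' w
  rw [← comp_assoc, hY i hi w hw, comp_assoc, comp_assoc,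
    adjoint_comp_eq_of_mem_intertwiners hρ_star (hY i hi) hw]

theorem commute_frameRegInv {ι : Type*} {A : VonNeumannAlgebra G}
    (hρ_star : ∀ a ∈ A, ρ' (star a) = star (ρ' a)) {Y : ι → G →L[ℂ] H} {s : Finset ι}
    (hY : ∀ i ∈ s, Y i ∈ intertwiners ρ' A) {w : G →L[ℂ] G} (hw : w ∈ A) (δ : ℝ) :
    Commute (ρ' w) (frameRegInv Y s δ) :=
  ((Algebra.commute_algebraMap_right δ (ρ' w)).add_right
    (commute_frameOperator hρ_star hY hw)).ringInverse_right

theorem adjoint_comp_comp_mem_of_commute {B : VonNeumannAlgebra G}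
    (hρ_star : ∀ a ∈ B.commutant, ρ' (star a) = star (ρ' a)) {x y : G →L[ℂ] H}
    (hx : x ∈ intertwiners ρ' B.commutant) (hy : y ∈ intertwiners ρ' B.commutant)
    {T : H →L[ℂ] H} (hT : ∀ w ∈ B.commutant, Commute (ρ' w) T) :
    adjoint y ∘L T ∘L x ∈ B := by
  rw [← B.commutant_commutant, VonNeumannAlgebra.mem_commutant_iff]
  intro w hw
  calc w ∘L (adjoint y ∘L T ∘L x) = adjoint y ∘L (ρ' w * T) ∘L x := by
        rw [← comp_assoc, ← adjoint_comp_eq_of_mem_intertwiners hρ_star hy hw, mul_def]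
        simp only [comp_assoc]
    _ = (adjoint y ∘L T ∘L x) ∘L w := by
        rw [(hT w hw).eq, mul_def, comp_assoc, hx w hw]
        simp only [comp_assoc]

theorem frameOperator_comp_frameRegInv_comp_mem {ι : Type*} {B : VonNeumannAlgebra G}
    {E : Submodule ℂ (G →L[ℂ] H)} (hE : ∀ x ∈ E, ∀ b ∈ B, x.comp b ∈ E)
    (hρ_star : ∀ a ∈ B.commutant, ρ' (star a) = star (ρ' a)) {Y : ι → G →L[ℂ] H}
    {s : Finset ι} (hYE : ∀ i ∈ s, Y i ∈ E) (hY : ∀ i ∈ s, Y i ∈ intertwiners ρ' B.commutant)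
    {x : G →L[ℂ] H} (hx : x ∈ intertwiners ρ' B.commutant) (δ : ℝ) :
    frameOperator Y s ∘L (frameRegInv Y s δ ∘L x) ∈ E := by
  rw [frameOperator, finsetSum_comp]
  refine E.sum_mem fun i hi => ?_
  rw [comp_assoc]
  exact hE _ (hYE i hi) _ (adjoint_comp_comp_mem_of_commute hρ_star hx (hY i hi)
    fun w hw => commute_frameRegInv hρ_star hY hw δ)

end Intertwiner

theorem vonNeumann_module_eq_intertwiner_space_general
    {G H : Type*}
    [NormedAddCommGroup G] [InnerProductSpace ℂ G] [CompleteSpace G]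
    [NormedAddCommGroup H] [InnerProductSpace ℂ H] [CompleteSpace H]
    (B : VonNeumannAlgebra G)
    (E : Submodule ℂ (G →L[ℂ] H))
    (hE2 : ∀ x ∈ E, ∀ b ∈ B, x.comp b ∈ E)
    (hE3 : SOTClosed (E : Set (G →L[ℂ] H)))
    (hE4 : Dense (Submodule.span ℂ {h : H | ∃ x ∈ E, ∃ g : G, x g = h} : Set H))
    (ρ' : (G →L[ℂ] G) → (H →L[ℂ] H))
    (hρ_star : ∀ a ∈ B.commutant, ρ' (star a) = star (ρ' a))
    (hρ_int : ∀ b' ∈ B.commutant, ∀ x ∈ E, ∀ g : G, ρ' b' (x g) = x (b' g))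
    :
    (E : Set (G →L[ℂ] H)) =
      {x : G →L[ℂ] H | ∀ b' ∈ B.commutant, (ρ' b').comp x = x.comp b'} := by
  have hE_int : (E : Set (G →L[ℂ] H)) ⊆ intertwiners ρ' B.commutant :=
    fun x hx b' hb' => ext fun g => hρ_int b' hb' x hx g
  refine hE_int.antisymm fun x hx => hE3 x ?_
  let Y : E → G →L[ℂ] H := (↑)
  have hdense : Dense (Submodule.span ℂ (⋃ i, Set.range (Y i)) : Set H) := by
    convert hE4 using 4
    ext h
    simp [Y, eq_comm]
  refine mem_closure_of_tendsto
    (tendsto_pi_nhds.2 fun g => tendsto_frameOperator_frameRegInv_apply Y hdense (x g))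
    (Eventually.of_forall fun p =>
      ⟨frameOperator Y p.1 ∘L (frameRegInv Y p.1 p.2 ∘L x), ?_, rfl⟩)
  exact frameOperator_comp_frameRegInv_comp_mem hE2 hρ_star (fun i _ => i.2)
    (fun i _ => hE_int i.2) hx p.2

/-- A concrete von Neumann `B`-module `E` equals the full intertwiner space
`C_{B'}(B(G,H)) = {x ∈ B(G,H) : ρ'(b') ∘ x = x ∘ b' for all b' ∈ B'}`. -/
theorem vonNeumann_module_eq_intertwiner_space
    {G H : Type*}
    [NormedAddCommGroup G] [InnerProductSpace ℂ G] [CompleteSpace G]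
    [NormedAddCommGroup H] [InnerProductSpace ℂ H] [CompleteSpace H]
    (B : VonNeumannAlgebra G)
    (E : Submodule ℂ (G →L[ℂ] H))
    (hE1 : ∀ x ∈ E, ∀ y ∈ E, (adjoint x).comp y ∈ B)
    (hE2 : ∀ x ∈ E, ∀ b ∈ B, x.comp b ∈ E)
    (hE3 : SOTClosed (E : Set (G →L[ℂ] H)))
    (hE4 : Dense (Submodule.span ℂ {h : H | ∃ x ∈ E, ∃ g : G, x g = h} : Set H))
    (ρ' : (G →L[ℂ] G) → (H →L[ℂ] H))
    (hρ_one : ρ' 1 = 1)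
    (hρ_mul : ∀ a ∈ B.commutant, ∀ b ∈ B.commutant, ρ' (a * b) = ρ' a * ρ' b)
    (hρ_add : ∀ a ∈ B.commutant, ∀ b ∈ B.commutant, ρ' (a + b) = ρ' a + ρ' b)
    (hρ_smul : ∀ (c : ℂ), ∀ a ∈ B.commutant, ρ' (c • a) = c • ρ' a)
    (hρ_star : ∀ a ∈ B.commutant, ρ' (star a) = star (ρ' a))
    (hρ_int : ∀ b' ∈ B.commutant, ∀ x ∈ E, ∀ g : G, ρ' b' (x g) = x (b' g))
    :
    (E : Set (G →L[ℂ] H)) =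
      {x : G →L[ℂ] H | ∀ b' ∈ B.commutant, (ρ' b').comp x = x.comp b'} :=
  vonNeumann_module_eq_intertwiner_space_general B E hE2 hE3 hE4 ρ' hρ_star hρ_int
end

section
/- B^a(E) equals the commutant of ρ'(B') in B(H); that is, {a ∈ B(H) : a ∘ x ∈ E and a* ∘ x ∈ E for all x ∈ E} = {a ∈ B(H) : a ρ'(b') = ρ'(b') a for all b' ∈ B'}. -/
/-!
If `a` maps `E` into itself, then `ρ'(b') x = x b'` holds both for `x` and for `a x`, so `a`
commutes with `ρ'(b')` on the total set `{x g}`. Conversely, if `c` commutes with `ρ'(B')`, then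
`y* c x` commutes with `B'` for all `x, y ∈ E`, so it lies in `B'' = B`; as `ρ'` preserves adjoints
the same holds for `c*`, and it remains to see that `E` is self-dual: `T ∈ E` as soon as
`y* T ∈ B` for every `y ∈ E`.

For self-duality fix points `g₁, …, gₙ` and let `w` be the residual of the orthogonal projection
of `(T gᵢ)ᵢ ∈ Hⁿ` onto the closure `M` of `{(S gᵢ)ᵢ : S ∈ E}`. For `y ∈ E` the diagonal action
of `y y*` is self-adjoint, leaves `M` invariant and maps `(T gᵢ)ᵢ` into `M`, so it kills `w`.
Hence `y* wᵢ = 0` for all `y ∈ E`, so `wᵢ = 0` by totality, and `T` is a strong limit of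
elements of `E`.
-/

open ContinuousLinearMap

open Module.End

theorem mem_closure_pi_of_forall_finset_restrict {ι X : Type*} [TopologicalSpace X]
    {s : Set (ι → X)} {f : ι → X}
    (h : ∀ J : Finset ι, J.restrict f ∈ closure (J.restrict '' s)) : f ∈ closure s := by
  rw [mem_closure_iff_nhds]
  intro t ht
  rw [nhds_pi, Filter.mem_pi] at ht
  obtain ⟨I, hI, u, hu, hIu⟩ := ht
  obtain ⟨_, hg, g, hgs, rfl⟩ := mem_closure_iff_nhds.mp (h hI.toFinset)
    (Set.univ.pi fun i => u i) (set_pi_mem_nhds Set.finite_univ fun i _ => hu i)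
  exact ⟨g, hIu fun i hi => hg ⟨i, hI.mem_toFinset.mpr hi⟩ (Set.mem_univ _), hgs⟩

namespace PiLp

variable {𝕜 ι H : Type*} [RCLike 𝕜] [NormedAddCommGroup H] [InnerProductSpace 𝕜 H]

def diagonal (a : H →L[𝕜] H) : PiLp 2 (fun _ : ι => H) →L[𝕜] PiLp 2 (fun _ : ι => H) :=
  (PiLp.continuousLinearEquiv 2 𝕜 _).symm.toContinuousLinearMap ∘L
    ContinuousLinearMap.pi fun i => a ∘L PiLp.proj 2 _ i

@[simp]
theorem diagonal_apply (a : H →L[𝕜] H) (v : PiLp 2 (fun _ : ι => H)) (i : ι) :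
    diagonal a v i = a (v i) :=
  rfl

theorem adjoint_diagonal [Fintype ι] [CompleteSpace H] (a : H →L[𝕜] H) :
    adjoint (diagonal (ι := ι) a) = diagonal (adjoint a) := by
  refine ((eq_adjoint_iff _ _).mpr fun v w => ?_).symm
  simp only [PiLp.inner_apply, diagonal_apply, adjoint_inner_left]

theorem isSelfAdjoint_diagonal [Fintype ι] [CompleteSpace H] {a : H →L[𝕜] H}
    (ha : IsSelfAdjoint a) : IsSelfAdjoint (diagonal (ι := ι) a) := by
  rw [isSelfAdjoint_iff', adjoint_diagonal, isSelfAdjoint_iff'.mp ha]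

end PiLp

theorem Submodule.apply_sub_starProjection_eq_zero {𝕜 E : Type*} [RCLike 𝕜]
    [NormedAddCommGroup E] [InnerProductSpace 𝕜 E] [CompleteSpace E] {K : Submodule 𝕜 E}
    [K.HasOrthogonalProjection] {D : E →L[𝕜] E} (hD : IsSelfAdjoint D)
    (hK : K ∈ invtSubmodule (D : E →ₗ[𝕜] E)) {v : E} (hv : D v ∈ K) :
    D (v - K.starProjection v) = 0 := by
  have hmem : D (v - K.starProjection v) ∈ K := by
    rw [map_sub]
    exact K.sub_mem hv (hK (K.starProjection_apply_mem v))
  have horth : D (v - K.starProjection v) ∈ Kᗮ := by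
    refine orthogonal_mem_invtSubmodule ?_ (K.sub_starProjection_mem_orthogonal v)
    rwa [isSelfAdjoint_iff'.mp hD]
  simpa using K.orthogonal_disjoint.le_bot ⟨hmem, horth⟩

section

variable {𝕜 G H : Type*} [RCLike 𝕜] [NormedAddCommGroup G] [InnerProductSpace 𝕜 G]
  [NormedAddCommGroup H] [InnerProductSpace 𝕜 H]

theorem commute_of_forall_comp_mem {E : Set (G →L[𝕜] H)}
    (hE : Dense (Submodule.span 𝕜 {h : H | ∃ x ∈ E, ∃ g : G, x g = h} : Set H))
    {a r : H →L[𝕜] H} {b : G →L[𝕜] G} (hr : ∀ x ∈ E, r ∘L x = x ∘L b)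
    (ha : ∀ x ∈ E, a ∘L x ∈ E) : Commute a r := by
  refine ext_on hE ?_
  rintro _ ⟨x, hx, g, rfl⟩
  calc (a * r) (x g) = a (x (b g)) := congrArg a congr($(hr x hx) g)
    _ = (r * a) (x g) := congr($(hr _ (ha x hx)) g).symm

theorem eq_zero_of_forall_adjoint_apply_eq_zero [CompleteSpace G] [CompleteSpace H]
    {E : Set (G →L[𝕜] H)}
    (hE : Dense (Submodule.span 𝕜 {h : H | ∃ x ∈ E, ∃ g : G, x g = h} : Set H))
    {h : H} (hh : ∀ x ∈ E, adjoint x h = 0) : h = 0 := by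
  have : innerSL 𝕜 h = 0 := by
    refine ext_on hE ?_
    rintro _ ⟨x, hx, g, rfl⟩
    rw [innerSL_apply_apply, ← adjoint_inner_left, hh x hx, inner_zero_left, zero_apply]
  simpa using congr($this h)

theorem commute_adjoint_comp_comp [CompleteSpace G] [CompleteSpace H] {x y : G →L[𝕜] H}
    {c r : H →L[𝕜] H} {b : G →L[𝕜] G} (hx : r ∘L x = x ∘L b)
    (hy : adjoint r ∘L y = y ∘L adjoint b) (hc : Commute c r) :
    Commute b (adjoint y ∘L c ∘L x) := by
  have hy' : adjoint y ∘L r = b ∘L adjoint y := by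
    simpa only [adjoint_comp, adjoint_adjoint] using congr(adjoint $hy)
  have hc' : c ∘L r = r ∘L c := hc
  change b ∘L adjoint y ∘L c ∘L x = (adjoint y ∘L c ∘L x) ∘L b
  rw [comp_assoc, comp_assoc, ← hx, ← comp_assoc c, hc', comp_assoc, ← comp_assoc (adjoint y) r,
    hy', comp_assoc]

def evalAt {ι : Type*} (p : ι → G) : (G →L[𝕜] H) →ₗ[𝕜] PiLp 2 (fun _ : ι => H) where
  toFun S := WithLp.toLp 2 fun i => S (p i)
  map_add' _ _ := rfl
  map_smul' _ _ := rfl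

theorem evalAt_mem_closure_of_forall_comp_mem [CompleteSpace G] [CompleteSpace H]
    {ι : Type*} [Fintype ι] (E : Submodule 𝕜 (G →L[𝕜] H))
    (hE : Dense (Submodule.span 𝕜 {h : H | ∃ x ∈ E, ∃ g : G, x g = h} : Set H))
    (hinv : ∀ y ∈ E, ∀ S ∈ E, (y ∘L adjoint y) ∘L S ∈ E)
    {T : G →L[𝕜] H} (hT : ∀ y ∈ E, (y ∘L adjoint y) ∘L T ∈ E) (p : ι → G) :
    evalAt p T ∈ (E.map (evalAt p)).topologicalClosure := by
  set M := (E.map (evalAt p)).topologicalClosure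
  have : CompleteSpace M := (E.map (evalAt p)).isClosed_topologicalClosure.completeSpace_coe
  rw [← M.starProjection_eq_self_iff, eq_comm, ← sub_eq_zero]
  set w := evalAt p T - M.starProjection (evalAt p T)
  have hdiag : ∀ y ∈ E, PiLp.diagonal (y ∘L adjoint y) w = 0 := by
    intro y hy
    refine M.apply_sub_starProjection_eq_zero ?_ ?_
      ((E.map (evalAt p)).le_topologicalClosure ⟨_, hT y hy, rfl⟩)
    · exact PiLp.isSelfAdjoint_diagonal (isPositive_self_comp_adjoint y).isSelfAdjoint
    · refine Submodule.topologicalClosure_mem_invtSubmodule ?_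
      rintro _ ⟨S, hS, rfl⟩
      exact ⟨_, hinv y hy S hS, rfl⟩
  ext i
  refine eq_zero_of_forall_adjoint_apply_eq_zero hE fun y hy => ?_
  have hker : w i ∈ LinearMap.ker ((y ∘L adjoint y : H →L[𝕜] H) : H →ₗ[𝕜] H) :=
    congr($(hdiag y hy) i)
  rwa [ker_self_comp_adjoint] at hker

end

theorem SOTClosed.mem_of_forall_evalAt_mem_closure {G H : Type*} [NormedAddCommGroup G]
    [InnerProductSpace ℂ G] [NormedAddCommGroup H] [InnerProductSpace ℂ H]
    {E : Submodule ℂ (G →L[ℂ] H)} (hE : SOTClosed (E : Set (G →L[ℂ] H))) {T : G →L[ℂ] H}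
    (hT : ∀ J : Finset G,
      evalAt ((↑) : J → G) T ∈ (E.map (evalAt ((↑) : J → G))).topologicalClosure) :
    T ∈ E := by
  refine hE T (mem_closure_pi_of_forall_finset_restrict fun J => ?_)
  refine map_mem_closure (f := WithLp.ofLp) (PiLp.continuous_ofLp 2 _) (hT J) ?_
  rintro _ ⟨S, hS, rfl⟩
  exact ⟨S, ⟨S, hS, rfl⟩, rfl⟩

theorem mem_of_forall_adjoint_comp_mem {G H : Type*} [NormedAddCommGroup G]
    [InnerProductSpace ℂ G] [CompleteSpace G] [NormedAddCommGroup H] [InnerProductSpace ℂ H]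
    [CompleteSpace H] {B : Set (G →L[ℂ] G)} {E : Submodule ℂ (G →L[ℂ] H)}
    (hE1 : ∀ x ∈ E, ∀ y ∈ E, adjoint x ∘L y ∈ B) (hE2 : ∀ x ∈ E, ∀ b ∈ B, x ∘L b ∈ E)
    (hE3 : SOTClosed (E : Set (G →L[ℂ] H)))
    (hE4 : Dense (Submodule.span ℂ {h : H | ∃ x ∈ E, ∃ g : G, x g = h} : Set H))
    {T : G →L[ℂ] H} (hT : ∀ y ∈ E, adjoint y ∘L T ∈ B) : T ∈ E :=
  hE3.mem_of_forall_evalAt_mem_closure fun _ =>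
    evalAt_mem_closure_of_forall_comp_mem E hE4
      (fun y hy S hS => by rw [comp_assoc]; exact hE2 y hy _ (hE1 y hy S hS))
      (fun y hy => by rw [comp_assoc]; exact hE2 y hy _ (hT y hy)) _

theorem adjointable_operators_eq_commutant_of_representation_general
    {G H : Type*}
    [NormedAddCommGroup G] [InnerProductSpace ℂ G] [CompleteSpace G]
    [NormedAddCommGroup H] [InnerProductSpace ℂ H] [CompleteSpace H]
    (B : VonNeumannAlgebra G)
    (E : Submodule ℂ (G →L[ℂ] H))
    (hE1 : ∀ x ∈ E, ∀ y ∈ E, (adjoint x).comp y ∈ B)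
    (hE2 : ∀ x ∈ E, ∀ b ∈ B, x.comp b ∈ E)
    (hE3 : SOTClosed (E : Set (G →L[ℂ] H)))
    (hE4 : Dense (Submodule.span ℂ {h : H | ∃ x ∈ E, ∃ g : G, x g = h} : Set H))
    (ρ' : (G →L[ℂ] G) → (H →L[ℂ] H))
    (hρ_star : ∀ a ∈ B.commutant, ρ' (star a) = star (ρ' a))
    (hρ_int : ∀ b' ∈ B.commutant, ∀ x ∈ E, ∀ g : G, ρ' b' (x g) = x (b' g))
    :
    {a : H →L[ℂ] H | (∀ x ∈ E, a.comp x ∈ E) ∧ (∀ x ∈ E, (adjoint a).comp x ∈ E)}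
      = {a : H →L[ℂ] H | ∀ b' ∈ B.commutant, a * ρ' b' = ρ' b' * a} := by
  have intertwine : ∀ b' ∈ B.commutant, ∀ x ∈ E, ρ' b' ∘L x = x ∘L b' :=
    fun b' hb' x hx => ext (hρ_int b' hb' x hx)
  have intertwine_adjoint :
      ∀ b' ∈ B.commutant, ∀ y ∈ E, adjoint (ρ' b') ∘L y = y ∘L adjoint b' := by
    intro b' hb' y hy
    rw [← star_eq_adjoint, ← star_eq_adjoint, ← hρ_star b' hb']
    exact intertwine _ (star_mem hb') y hy
  have comp_mem : ∀ c : H →L[ℂ] H, (∀ b' ∈ B.commutant, Commute c (ρ' b')) →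
      ∀ x ∈ E, c ∘L x ∈ E := fun c hc x hx =>
    mem_of_forall_adjoint_comp_mem hE1 hE2 hE3 hE4 fun y hy => by
      rw [← B.commutant_commutant, SetLike.mem_coe, VonNeumannAlgebra.mem_commutant_iff]
      exact fun b' hb' => commute_adjoint_comp_comp (intertwine b' hb' x hx)
        (intertwine_adjoint b' hb' y hy) (hc b' hb')
  ext a
  refine ⟨fun ⟨ha, _⟩ b' hb' => commute_of_forall_comp_mem hE4 (intertwine b' hb') ha,
    fun ha => ⟨comp_mem a ha, comp_mem _ fun b' hb' => ?_⟩⟩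
  have h := congr(star $(ha (star b') (star_mem hb')))
  rw [star_mul, star_mul, hρ_star b' hb', star_star, star_eq_adjoint] at h
  exact h.symm

/-- `Bᵃ(E)` equals the commutant of `ρ'(B')` in `B(H)`. -/
theorem adjointable_operators_eq_commutant_of_representation
    {G H : Type*}
    [NormedAddCommGroup G] [InnerProductSpace ℂ G] [CompleteSpace G]
    [NormedAddCommGroup H] [InnerProductSpace ℂ H] [CompleteSpace H]
    (B : VonNeumannAlgebra G)
    (E : Submodule ℂ (G →L[ℂ] H))
    (hE1 : ∀ x ∈ E, ∀ y ∈ E, (adjoint x).comp y ∈ B)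
    (hE2 : ∀ x ∈ E, ∀ b ∈ B, x.comp b ∈ E)
    (hE3 : SOTClosed (E : Set (G →L[ℂ] H)))
    (hE4 : Dense (Submodule.span ℂ {h : H | ∃ x ∈ E, ∃ g : G, x g = h} : Set H))
    (ρ' : (G →L[ℂ] G) → (H →L[ℂ] H))
    (hρ_one : ρ' 1 = 1)
    (hρ_mul : ∀ a ∈ B.commutant, ∀ b ∈ B.commutant, ρ' (a * b) = ρ' a * ρ' b)
    (hρ_add : ∀ a ∈ B.commutant, ∀ b ∈ B.commutant, ρ' (a + b) = ρ' a + ρ' b)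
    (hρ_smul : ∀ (c : ℂ), ∀ a ∈ B.commutant, ρ' (c • a) = c • ρ' a)
    (hρ_star : ∀ a ∈ B.commutant, ρ' (star a) = star (ρ' a))
    (hρ_int : ∀ b' ∈ B.commutant, ∀ x ∈ E, ∀ g : G, ρ' b' (x g) = x (b' g))
    :
    {a : H →L[ℂ] H | (∀ x ∈ E, a.comp x ∈ E) ∧ (∀ x ∈ E, (adjoint a).comp x ∈ E)}
      = {a : H →L[ℂ] H | ∀ b' ∈ B.commutant, a * ρ' b' = ρ' b' * a} :=
  adjointable_operators_eq_commutant_of_representation_general B E hE1 hE2 hE3 hE4 ρ' hρ_star hρ_int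
end

section
/- Suppose g₀ ∈ G is a cyclic vector for B, i.e. {b g₀ : b ∈ B} is dense in G. Then for every h ∈ H with ‖h‖ = 1 and every ε > 0 there exist x ∈ E with x ∘ x* ∘ x = x (a partial isometry belonging to E) and g ∈ G with ‖g‖ = 1 such that ‖h − x g‖ < ε. -/
open ContinuousLinearMap

/-!
Since `E ∘ B ⊆ E` and `g₀` is cyclic, the vectors `y g₀` with `y ∈ E` are dense, so some `y ∈ E`
has `y g₀` close to `h`. Write `s = |y| = (y* y)^{1/2} ∈ B` and take the polar decomposition
`y = v s`: the partial isometry `v` is the strong limit of `y (s + 1/n)⁻¹ ∈ E`, hence lies in `E`.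
Then `g = s g₀ / ‖s g₀‖` is a unit vector with `v g = y g₀ / ‖y g₀‖`, which is close to `h`.
-/

open Filter Topology
open scoped InnerProductSpace

section CStarAlgebra

variable {A : Type*} [CStarAlgebra A] [PartialOrder A] [StarOrderedRing A] {s : A} {δ : ℝ}

theorem continuousOn_inv_add_spectrum (hs : 0 ≤ s) (hδ : 0 < δ) :
    ContinuousOn (fun t : ℝ => (t + δ)⁻¹) (spectrum ℝ s) :=
  (continuousOn_id.add continuousOn_const).inv₀ fun _ ht =>
    (add_pos_of_nonneg_of_pos (spectrum_nonneg_of_nonneg hs ht) hδ).ne'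

theorem norm_mul_cfc_inv_add_le_one (hs : 0 ≤ s) (hδ : 0 < δ) :
    ‖s * cfc (fun t : ℝ => (t + δ)⁻¹) s‖ ≤ 1 := by
  have hc := continuousOn_inv_add_spectrum hs hδ
  have hcfc : s * cfc (fun t : ℝ => (t + δ)⁻¹) s = cfc (fun t => t * (t + δ)⁻¹) s := by
    rw [cfc_mul (fun t => t) (fun t => (t + δ)⁻¹) s continuousOn_id hc, cfc_id' ℝ s]
  rw [hcfc]
  refine norm_cfc_le zero_le_one fun t ht => ?_
  have ht0 := spectrum_nonneg_of_nonneg hs ht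
  rw [Real.norm_of_nonneg (by positivity), ← div_eq_mul_inv, div_le_one (by positivity)]
  linarith

theorem norm_mul_cfc_inv_add_mul_sub_le (hs : 0 ≤ s) (hδ : 0 < δ) :
    ‖s * cfc (fun t : ℝ => (t + δ)⁻¹) s * s - s‖ ≤ δ := by
  have hc := continuousOn_inv_add_spectrum hs hδ
  have hcfc : s * cfc (fun t : ℝ => (t + δ)⁻¹) s * s - s =
      cfc (fun t => t * (t + δ)⁻¹ * t - t) s := by
    rw [cfc_sub (fun t => t * (t + δ)⁻¹ * t) (fun t => t) s
      ((continuousOn_id.mul hc).mul continuousOn_id) continuousOn_id,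
      cfc_mul (fun t => t * (t + δ)⁻¹) (fun t => t) s (continuousOn_id.mul hc) continuousOn_id,
      cfc_mul (fun t => t) (fun t => (t + δ)⁻¹) s continuousOn_id hc, cfc_id' ℝ s]
  rw [hcfc]
  refine norm_cfc_le hδ.le fun t ht => ?_
  have ht0 := spectrum_nonneg_of_nonneg hs ht
  have hsub : t * (t + δ)⁻¹ * t - t = -(δ * (t / (t + δ))) := by field_simp; ring
  rw [hsub, norm_neg, Real.norm_of_nonneg (by positivity)]
  exact mul_le_of_le_one_right hδ.le ((div_le_one (by positivity)).mpr (by linarith))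

end CStarAlgebra

theorem norm_sub_inv_norm_smul_le {V : Type*} [NormedAddCommGroup V] [NormedSpace ℝ V]
    {h : V} (hh : ‖h‖ = 1) (u : V) : ‖h - ‖u‖⁻¹ • u‖ ≤ 2 * ‖h - u‖ := by
  have hu : ‖u - ‖u‖⁻¹ • u‖ ≤ ‖h - u‖ := by
    rcases eq_or_ne u 0 with rfl | hu
    · simp
    have hpos : 0 < ‖u‖ := norm_pos_iff.mpr hu
    calc ‖u - ‖u‖⁻¹ • u‖ = |‖u‖ - ‖h‖| := by
          rw [show u - ‖u‖⁻¹ • u = (1 - ‖u‖⁻¹) • u by rw [sub_smul, one_smul], norm_smul,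
            Real.norm_eq_abs, hh, show ‖u‖ - 1 = (1 - ‖u‖⁻¹) * ‖u‖ by field_simp, abs_mul,
            abs_of_pos hpos]
      _ ≤ ‖h - u‖ := by rw [norm_sub_rev h]; exact abs_norm_sub_norm_le u h
  calc ‖h - ‖u‖⁻¹ • u‖ = ‖(h - u) + (u - ‖u‖⁻¹ • u)‖ := by rw [sub_add_sub_cancel]
    _ ≤ 2 * ‖h - u‖ := by linarith [norm_add_le (h - u) (u - ‖u‖⁻¹ • u)]

theorem isClosed_setOf_cauchySeq_apply {𝕜 V W : Type*} [NontriviallyNormedField 𝕜]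
    [SeminormedAddCommGroup V] [SeminormedAddCommGroup W] [NormedSpace 𝕜 V] [NormedSpace 𝕜 W]
    {X : ℕ → V →L[𝕜] W} {C : ℝ} (hX : ∀ n, ‖X n‖ ≤ C) :
    IsClosed {g | CauchySeq fun n => X n g} := by
  have hD : Equicontinuous fun p : ℕ × ℕ => ⇑(X p.1 - X p.2) :=
    ((NormedSpace.equicontinuous_TFAE fun p : ℕ × ℕ => X p.1 - X p.2).out 5 1).mp <|
      show ∃ C, ∀ p : ℕ × ℕ, ‖X p.1 - X p.2‖ ≤ C from
        ⟨C + C, fun p => (norm_sub_le _ _).trans (add_le_add (hX p.1) (hX p.2))⟩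
  simp_rw [cauchySeq_iff_tendsto_dist_atTop_0, dist_eq_norm, ← sub_apply,
    ← tendsto_zero_iff_norm_tendsto_zero]
  exact hD.isClosed_setOfPred_tendsto continuous_const

section HilbertSpace

variable {G H : Type*} [NormedAddCommGroup G] [InnerProductSpace ℂ G]
  [NormedAddCommGroup H] [InnerProductSpace ℂ H]

theorem dense_image_apply_of_cyclic {E : Submodule ℂ (G →L[ℂ] H)}
    {B : Set (G →L[ℂ] G)} (hEB : ∀ x ∈ E, ∀ b ∈ B, x.comp b ∈ E)
    (hE : Dense (Submodule.span ℂ {h : H | ∃ x ∈ E, ∃ g : G, x g = h} : Set H))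
    {g₀ : G} (hg₀ : Dense ((fun b : G →L[ℂ] G => b g₀) '' B)) :
    Dense ((fun x : G →L[ℂ] H => x g₀) '' E) := by
  let D : Submodule ℂ H := E.map (apply ℂ H g₀ : (G →L[ℂ] H) →ₗ[ℂ] H)
  have hD : (D : Set H) = (fun x : G →L[ℂ] H => x g₀) '' E := Submodule.map_coe _ _
  rw [← hD, ← dense_closure, ← Submodule.topologicalClosure_coe]
  refine hE.mono (Submodule.span_le.mpr ?_)
  rintro _ ⟨x, hx, g, rfl⟩
  rw [Submodule.topologicalClosure_coe, hD]
  refine closure_mono ?_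
    (mem_closure_image x.continuous.continuousAt (hg₀.closure_eq ▸ Set.mem_univ g))
  rintro _ ⟨_, ⟨b, hb, rfl⟩, rfl⟩
  exact ⟨x.comp b, hEB x hx b hb, rfl⟩

theorem SOTClosed.exists_tendsto [CompleteSpace G] [CompleteSpace H]
    {E : Set (G →L[ℂ] H)} (hE : SOTClosed E)
    {X : ℕ → G →L[ℂ] H} (hXE : ∀ n, X n ∈ E) (hX : ∀ g, CauchySeq fun n => X n g) :
    ∃ v ∈ E, ∀ g, Tendsto (fun n => X n g) atTop (𝓝 (v g)) := by
  have hlim : Tendsto (fun n g => X n g) atTop (𝓝 fun g => limUnder atTop fun n => X n g) :=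
    tendsto_pi_nhds.mpr fun g => (hX g).tendsto_limUnder
  let v := continuousLinearMapOfTendsto X hlim
  exact ⟨v, hE v (mem_closure_of_tendsto hlim (Eventually.of_forall fun n => ⟨X n, hXE n, rfl⟩)),
    tendsto_pi_nhds.mp hlim⟩

theorem IsSelfAdjoint.dense_ker_sup_range [CompleteSpace G] {s : G →L[ℂ] G}
    (hs : IsSelfAdjoint s) : Dense ((s.ker ⊔ s.range : Submodule ℂ G) : Set G) := by
  rw [Submodule.dense_iff_topologicalClosure_eq_top, Submodule.topologicalClosure_eq_top_iff,
    ← Submodule.inf_orthogonal, hs.isStarNormal.orthogonal_range, inf_comm]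
  exact Submodule.inf_orthogonal_eq_bot _

theorem adjoint_apply_apply_eq_of_norm_apply_eq [CompleteSpace G] [CompleteSpace H]
    {v : G →L[ℂ] H} (hv : ‖v‖ ≤ 1) {z : G} (hz : ‖v z‖ = ‖z‖) : adjoint v (v z) = z := by
  have hle : ‖adjoint v (v z)‖ ≤ ‖z‖ := by
    calc ‖adjoint v (v z)‖ ≤ ‖adjoint v‖ * ‖v z‖ := le_opNorm _ _
      _ ≤ 1 * ‖z‖ := by rw [adjoint.norm_map, hz]; gcongr
      _ = ‖z‖ := one_mul _
  have hre : RCLike.re ⟪adjoint v (v z), z⟫_ℂ = ‖z‖ ^ 2 := by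
    rw [adjoint_inner_left, inner_self_eq_norm_sq (𝕜 := ℂ), hz]
  have hsq : ‖adjoint v (v z) - z‖ ^ 2 ≤ 0 := by
    rw [norm_sub_sq (𝕜 := ℂ), hre]
    nlinarith [norm_nonneg (adjoint v (v z))]
  rw [← sub_eq_zero, ← norm_eq_zero]
  exact pow_eq_zero_iff (n := 2) two_ne_zero |>.mp (le_antisymm hsq (sq_nonneg _))

theorem norm_sqrt_adjoint_comp_self_apply [CompleteSpace G] [CompleteSpace H]
    (y : G →L[ℂ] H) (g : G) : ‖CFC.sqrt (adjoint y ∘L y) g‖ = ‖y g‖ := by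
  set s := CFC.sqrt (adjoint y ∘L y)
  have hs : IsSelfAdjoint s := .of_nonneg (CFC.sqrt_nonneg _)
  have hss : s * s = adjoint y ∘L y :=
    CFC.sqrt_mul_sqrt_self _ ((nonneg_iff_isPositive _).mpr (isPositive_adjoint_comp_self y))
  refine (sq_eq_sq₀ (norm_nonneg _) (norm_nonneg _)).mp ?_
  rw [← inner_self_eq_norm_sq (𝕜 := ℂ), ← inner_self_eq_norm_sq (𝕜 := ℂ),
    ← adjoint_inner_left, ← star_eq_adjoint, hs.star_eq, ← mul_apply_eq_comp, hss, comp_apply,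
    adjoint_inner_left]

theorem VonNeumannAlgebra.cfc_mem [CompleteSpace G] (B : VonNeumannAlgebra G)
    {a : G →L[ℂ] G} (ha : a ∈ B) (f : ℝ → ℝ) : cfc f a ∈ B := by
  have : IsClosed (B.toStarSubalgebra : Set (G →L[ℂ] G)) :=
    B.centralizer_centralizer ▸ Set.isClosed_centralizer _
  exact _root_.cfc_mem (s := B.toStarSubalgebra) (𝕜' := ℂ) f ha

theorem VonNeumannAlgebra.sqrt_mem [CompleteSpace G] (B : VonNeumannAlgebra G)
    {a : G →L[ℂ] G} (ha : a ∈ B) (ha0 : 0 ≤ a) : CFC.sqrt a ∈ B := by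
  rw [CFC.sqrt_eq_real_sqrt a ha0, cfcₙ_eq_cfc]
  exact B.cfc_mem ha _

section PolarDecomposition

variable [CompleteSpace G]

/-- For `δ → 0` these converge strongly to the partial isometry `v` with `v ∘ s = y`. -/
noncomputable def polarApprox (y : G →L[ℂ] H) (s : G →L[ℂ] G) (δ : ℝ) : G →L[ℂ] H :=
  y ∘L cfc (fun t : ℝ => (t + δ)⁻¹) s

variable {y : G →L[ℂ] H} {s : G →L[ℂ] G} {δ : ℝ}

theorem norm_polarApprox_le_one (hs : 0 ≤ s) (hsy : ∀ g, ‖s g‖ = ‖y g‖) (hδ : 0 < δ) :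
    ‖polarApprox y s δ‖ ≤ 1 := by
  refine opNorm_le_bound _ zero_le_one fun g => ?_
  rw [polarApprox, comp_apply, ← hsy, ← mul_apply_eq_comp]
  exact le_of_opNorm_le _ (norm_mul_cfc_inv_add_le_one hs hδ) g

theorem norm_polarApprox_apply_sub_le (hs : 0 ≤ s) (hsy : ∀ g, ‖s g‖ = ‖y g‖) (hδ : 0 < δ)
    (g : G) : ‖polarApprox y s δ (s g) - y g‖ ≤ δ * ‖g‖ := by
  rw [polarApprox, comp_apply, ← map_sub, ← hsy, map_sub, ← mul_apply_eq_comp,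
    ← mul_apply_eq_comp, ← sub_apply]
  exact le_of_opNorm_le _ (norm_mul_cfc_inv_add_mul_sub_le hs hδ) g

theorem polarApprox_apply_eq_zero (hsy : ∀ g, ‖s g‖ = ‖y g‖) {k : G} (hk : s k = 0) :
    polarApprox y s δ k = 0 := by
  rw [polarApprox, comp_apply, ← norm_eq_zero, ← hsy, ← mul_apply_eq_comp,
    ← ((Commute.refl s).cfc_real _).eq, mul_apply_eq_comp, hk, map_zero, norm_zero]

/-- `v` is isometric on `range s` and vanishes on `ker s`, whose sum is dense. -/
theorem exists_partialIsometry_of_tendsto [CompleteSpace H]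
    {E : Set (G →L[ℂ] H)} (hE : SOTClosed E) (hs : IsSelfAdjoint s) (hsy : ∀ g, ‖s g‖ = ‖y g‖)
    {X : ℕ → G →L[ℂ] H} (hXE : ∀ n, X n ∈ E) (hX : ∀ n, ‖X n‖ ≤ 1)
    (hXs : ∀ g, Tendsto (fun n => X n (s g)) atTop (𝓝 (y g)))
    (hXker : ∀ n k, s k = 0 → X n k = 0) :
    ∃ v ∈ E, v.comp ((adjoint v).comp v) = v ∧ v ∘L s = y := by
  have hdense := hs.dense_ker_sup_range
  have hcauchy : ∀ g, CauchySeq fun n => X n g := by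
    refine hdense.induction (fun g hg => ?_) (isClosed_setOf_cauchySeq_apply hX)
    obtain ⟨k, hk, _, ⟨r, rfl⟩, rfl⟩ := Submodule.mem_sup.mp hg
    simp_rw [map_add, hXker _ k hk, zero_add]
    exact (hXs r).cauchySeq
  obtain ⟨v, hvE, hv⟩ := hE.exists_tendsto hXE hcauchy
  have hvs : v ∘L s = y := ext fun g => tendsto_nhds_unique (hv (s g)) (hXs g)
  have hvker : ∀ k, s k = 0 → v k = 0 := fun k hk =>
    tendsto_nhds_unique (hv k) (by simp only [hXker _ k hk, tendsto_const_nhds])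
  have hv1 : ‖v‖ ≤ 1 := opNorm_le_bound _ zero_le_one fun g =>
    le_of_tendsto (hv g).norm (Eventually.of_forall fun n => le_of_opNorm_le _ (hX n) g)
  refine ⟨v, hvE, ext fun g => ?_, hvs⟩
  refine hdense.induction (fun g hg => ?_) (isClosed_eq (by fun_prop) v.continuous) g
  obtain ⟨k, hk, _, ⟨r, rfl⟩, rfl⟩ := Submodule.mem_sup.mp hg
  have hisom : ‖v (s r)‖ = ‖s r‖ := by rw [← comp_apply, hvs, hsy]
  simp only [comp_apply, coe_coe, map_add, hvker k hk, map_zero, zero_add,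
    adjoint_apply_apply_eq_of_norm_apply_eq hv1 hisom]

theorem exists_partialIsometry_comp_eq [CompleteSpace H]
    (B : VonNeumannAlgebra G) {E : Submodule ℂ (G →L[ℂ] H)}
    (hEB : ∀ x ∈ E, ∀ b ∈ B, x.comp b ∈ E) (hE : SOTClosed (E : Set (G →L[ℂ] H)))
    (hy : y ∈ E) (hs : 0 ≤ s) (hsB : s ∈ B) (hsy : ∀ g, ‖s g‖ = ‖y g‖) :
    ∃ v ∈ E, v.comp ((adjoint v).comp v) = v ∧ v ∘L s = y := by
  have hδ (n : ℕ) : (0 : ℝ) < 1 / (n + 1) := Nat.one_div_pos_of_nat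
  refine exists_partialIsometry_of_tendsto hE (.of_nonneg hs) hsy
    (X := fun n => polarApprox y s (1 / (n + 1))) (fun n => hEB y hy _ (B.cfc_mem hsB _))
    (fun n => norm_polarApprox_le_one hs hsy (hδ n)) (fun g => ?_)
    (fun n k hk => polarApprox_apply_eq_zero hsy hk)
  rw [tendsto_iff_norm_sub_tendsto_zero]
  refine squeeze_zero (fun n => norm_nonneg _)
    (fun n => norm_polarApprox_apply_sub_le hs hsy (hδ n) g) ?_
  simpa using tendsto_one_div_add_atTop_nhds_zero_nat.mul_const ‖g‖

end PolarDecomposition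

end HilbertSpace

/-- If `g₀` is cyclic for `B`, every unit vector of `H` is approximated by `x g` with
`x` a partial isometry in `E` and `g` a unit vector of `G`. -/
theorem approx_by_partialIsometry_of_cyclic
    {G H : Type*}
    [NormedAddCommGroup G] [InnerProductSpace ℂ G] [CompleteSpace G]
    [NormedAddCommGroup H] [InnerProductSpace ℂ H] [CompleteSpace H]
    (B : VonNeumannAlgebra G)
    (E : Submodule ℂ (G →L[ℂ] H))
    (hE1 : ∀ x ∈ E, ∀ y ∈ E, (adjoint x).comp y ∈ B)
    (hE2 : ∀ x ∈ E, ∀ b ∈ B, x.comp b ∈ E)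
    (hE3 : SOTClosed (E : Set (G →L[ℂ] H)))
    (hE4 : Dense (Submodule.span ℂ {h : H | ∃ x ∈ E, ∃ g : G, x g = h} : Set H))
    (g₀ : G) (hg₀ : Dense ((fun b : G →L[ℂ] G => b g₀) '' (B : Set (G →L[ℂ] G)))) :
    ∀ h : H, ‖h‖ = 1 → ∀ ε > 0, ∃ x ∈ E, x.comp ((adjoint x).comp x) = x ∧
      ∃ g : G, ‖g‖ = 1 ∧ ‖h - x g‖ < ε := by
  intro h hh ε hε
  obtain ⟨_, ⟨y, hy, rfl⟩, hyh⟩ := (dense_image_apply_of_cyclic hE2 hE4 hg₀).exists_dist_lt h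
    (lt_min (half_pos hε) one_half_pos)
  simp only [dist_eq_norm, lt_min_iff] at hyh
  set s := CFC.sqrt (adjoint y ∘L y)
  have hsy : ∀ g, ‖s g‖ = ‖y g‖ := norm_sqrt_adjoint_comp_self_apply y
  have hsB : s ∈ B := B.sqrt_mem (hE1 y hy y hy)
    ((nonneg_iff_isPositive _).mpr (isPositive_adjoint_comp_self y))
  obtain ⟨v, hvE, hv, hvs⟩ :=
    exists_partialIsometry_comp_eq B hE2 hE3 hy (CFC.sqrt_nonneg _) hsB hsy
  have hyg₀ : y g₀ ≠ 0 := by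
    rintro h0
    rw [h0, sub_zero, hh] at hyh
    linarith [hyh.2]
  refine ⟨v, hvE, hv, ‖s g₀‖⁻¹ • s g₀,
    norm_smul_inv_norm (by rwa [← norm_ne_zero_iff, hsy, norm_ne_zero_iff]), ?_⟩
  rw [map_smul_of_tower, ← comp_apply, hvs, hsy]
  linarith [norm_sub_inv_norm_smul_le hh (y g₀), hyh.1]
end
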